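/- arXiv:1412.3605 — 14 statements merged into one kernel-verified Lean document; each statement's English description precedes it below -/
import Mathlib

section
/- For every divisor D ∈ ℚ^s, the set of integral antinef divisors D' with D' ≥ D (entrywise) is nonempty and has a least element D̃ with respect to the entrywise order; in particular D̃ is the unique integral antinef divisor ≥ D such that every integral antinef divisor D' ≥ D satisfies D' ≥ D̃ (D̃ is called the antinef closure of D). -/
open scoped BigOperators

/-- Intersection `D · E i` of an integral divisor `D` with the `i`-th component. -/
def interZ {s : ℕ} (N : Matrix (Fin s) (Fin s) ℤ) (D : Fin s → ℤ) (i : Fin s) : ℤ :=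
  ∑ j, D j * N j i

/-- An integral divisor is antinef if it intersects every exceptional component
nonpositively. -/
def Antinef {s : ℕ} (r : ℕ) (N : Matrix (Fin s) (Fin s) ℤ) (D : Fin s → ℤ) : Prop :=
  ∀ i : Fin s, (i : ℕ) < r → interZ N D i ≤ 0

/-- `Dt` is the antinef closure of the rational divisor `D`: the least integral antinef
divisor lying entrywise above `D`. -/
def IsAntinefClosure {s : ℕ} (r : ℕ) (N : Matrix (Fin s) (Fin s) ℤ)
    (D : Fin s → ℚ) (Dt : Fin s → ℤ) : Prop :=
  Antinef r N Dt ∧ (∀ i, D i ≤ (Dt i : ℚ)) ∧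
    ∀ D' : Fin s → ℤ, Antinef r N D' → (∀ i, D i ≤ (D' i : ℚ)) → ∀ i, Dt i ≤ D' i

/-!
Pointwise minima of antinef divisors are antinef, because off-diagonal intersection numbers are
nonnegative, and every divisor above `D` is at least `⌈D⌉`. In the locally finite lattice `ℤ^s`
an inf-closed set that is bounded below has a least element once it is nonempty.

For nonemptiness, let `A` be the exceptional block. It is negative definite, so `det A ≠ 0`, and
`z = -(det A) 𝟙 · adj A` satisfies `z A = -(det A)² 𝟙 < 0`. A vector `x` with `x A ≤ 0` is
nonnegative: pairing `x A` with the negative part `x⁻` gives `x⁻ A x⁻ ≥ x⁺ A x⁻ ≥ 0`, since `x⁺`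
and `x⁻` have disjoint supports, so `x⁻ = 0` by definiteness. Hence `z ≥ 0`, and `⌈D⌉ + M z` is
antinef for large `M`.
-/

open Matrix

theorem InfClosed.exists_isLeast {α : Type*} [SemilatticeInf α] [LocallyFiniteOrder α]
    {S : Set α} (hS : InfClosed S) (hne : S.Nonempty) (hbdd : BddBelow S) :
    ∃ m, IsLeast S m := by
  obtain ⟨c, hc⟩ := hne
  obtain ⟨b, hb⟩ := hbdd
  have hbox : InfClosed (S ∩ Set.Icc b c) := hS.inter fun x hx y hy =>
    ⟨le_inf hx.1 hy.1, inf_le_of_left_le hx.2⟩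
  have hfin : (S ∩ Set.Icc b c).Finite := (Set.finite_Icc b c).inter_of_right S
  have hcbox : c ∈ hfin.toFinset := hfin.mem_toFinset.2 ⟨hc, hb hc, le_rfl⟩
  have hm := hbox.finsetInf'_mem ⟨c, hcbox⟩ (f := id) (fun x hx => hfin.mem_toFinset.1 hx)
  refine ⟨_, hm.1, fun x hx => ?_⟩
  calc hfin.toFinset.inf' ⟨c, hcbox⟩ id ≤ x ⊓ c :=
        Finset.inf'_le _ (hfin.mem_toFinset.2 ⟨hS hx hc, le_inf (hb hx) (hb hc), inf_le_right⟩)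
    _ ≤ x := inf_le_left

theorem Fintype.sum_extend_subtype_val {ι R M : Type*} [Fintype ι] [Zero R] [AddCommMonoid M]
    {p : ι → Prop} [DecidablePred p] (w : {i // p i} → R) (F : ι → R → M)
    (hF : ∀ i, F i 0 = 0) :
    ∑ i, F i (Function.extend Subtype.val w 0 i) = ∑ a : {i // p i}, F a (w a) := by
  have hsupp : ∀ i ∈ Finset.univ, F i (Function.extend Subtype.val w 0 i) ≠ 0 → p i := by
    intro i _ hi
    by_contra hp
    rw [Function.extend_apply' _ _ _ (by simpa using hp), Pi.zero_apply, hF] at hi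
    exact hi rfl
  rw [← Finset.sum_filter_of_ne hsupp,
    Finset.sum_subtype (p := p) (F := inferInstance) _ fun i => by simp]
  simp only [Subtype.val_injective.extend_apply]

namespace Matrix

variable {ι R : Type*} [Fintype ι]

section Extend

variable [CommSemiring R] {p : ι → Prop} [DecidablePred p]

theorem extend_subtype_val_vecMul_apply (N : Matrix ι ι R) (w : {i // p i} → R)
    (a : {i // p i}) :
    (Function.extend Subtype.val w 0 ᵥ* N) a = (w ᵥ* N.submatrix Subtype.val Subtype.val) a :=
  Fintype.sum_extend_subtype_val w (fun i t => t * N i a) fun _ => zero_mul _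

theorem extend_subtype_val_dotProduct_mulVec (N : Matrix ι ι R) (w : {i // p i} → R) :
    Function.extend Subtype.val w 0 ⬝ᵥ N *ᵥ Function.extend Subtype.val w 0 =
      w ⬝ᵥ N.submatrix Subtype.val Subtype.val *ᵥ w := by
  rw [dotProduct_mulVec, dotProduct_mulVec, dotProduct,
    Fintype.sum_extend_subtype_val w (fun i t => _ * t) fun _ => mul_zero _]
  simp only [extend_subtype_val_vecMul_apply, dotProduct]

end Extend

theorem vecMul_apply_le_of_le_of_eq [Semiring R] [PartialOrder R] [IsOrderedRing R]
    {N : Matrix ι ι R} {i : ι} (hoff : ∀ j, j ≠ i → 0 ≤ N j i) {C A : ι → R} (hle : C ≤ A)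
    (heq : C i = A i) : (C ᵥ* N) i ≤ (A ᵥ* N) i := by
  refine Finset.sum_le_sum fun j _ => ?_
  rcases eq_or_ne j i with rfl | hj
  · rw [heq]
  · exact mul_le_mul_of_nonneg_right (hle j) (hoff j hj)

variable [CommRing R] [LinearOrder R] [IsStrictOrderedRing R] {A : Matrix ι ι R}

theorem nonneg_of_vecMul_nonpos (hoff : ∀ i j, i ≠ j → 0 ≤ A i j)
    (hdef : ∀ x, x ≠ 0 → x ⬝ᵥ A *ᵥ x < 0) {x : ι → R} (hx : x ᵥ* A ≤ 0) : 0 ≤ x := by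
  have hsplit : x = x⁺ - x⁻ := (posPart_sub_negPart x).symm
  suffices x⁻ = 0 by rw [hsplit, this, sub_zero]; exact posPart_nonneg x
  by_contra hne
  have hpair : x ᵥ* A ⬝ᵥ x⁻ ≤ 0 :=
    Finset.sum_nonpos fun i _ => mul_nonpos_of_nonpos_of_nonneg (hx i) (negPart_nonneg _)
  have hcross : 0 ≤ x⁺ ᵥ* A ⬝ᵥ x⁻ := by
    refine Finset.sum_nonneg fun j _ => ?_
    rw [vecMul, dotProduct, Finset.sum_mul]
    refine Finset.sum_nonneg fun i _ => ?_
    rcases eq_or_ne i j with rfl | hij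
    · have : (x i)⁺ * (x i)⁻ = 0 := by
        rcases le_total (x i) 0 with h | h <;> simp [h]
      simp only [Pi.posPart_apply, Pi.negPart_apply]
      rw [mul_right_comm, this, zero_mul]
    · exact mul_nonneg (mul_nonneg (posPart_nonneg _) (hoff i j hij)) (negPart_nonneg _)
  have hquad := hdef _ hne
  rw [dotProduct_mulVec] at hquad
  rw [hsplit, sub_vecMul, sub_dotProduct, ← hsplit] at hpair
  linarith

theorem det_ne_zero_of_dotProduct_mulVec_neg [DecidableEq ι]
    (hdef : ∀ x, x ≠ 0 → x ⬝ᵥ A *ᵥ x < 0) : A.det ≠ 0 := fun h => by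
  obtain ⟨v, hv, hvA⟩ := exists_vecMul_eq_zero_iff.2 h
  simpa [dotProduct_mulVec, hvA] using hdef v hv

theorem exists_nonneg_vecMul_neg (hoff : ∀ i j, i ≠ j → 0 ≤ A i j)
    (hdef : ∀ x, x ≠ 0 → x ⬝ᵥ A *ᵥ x < 0) : ∃ z, 0 ≤ z ∧ ∀ i, (z ᵥ* A) i < 0 := by
  classical
  have hdet := det_ne_zero_of_dotProduct_mulVec_neg hdef
  set z := (fun _ => -A.det) ᵥ* A.adjugate
  have hz : ∀ i, (z ᵥ* A) i = -(A.det * A.det) := fun i => by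
    rw [vecMul_vecMul, adjugate_mul, vecMul_smul, vecMul_one]
    simp
  have hzA : ∀ i, (z ᵥ* A) i < 0 := fun i => by
    rw [hz]; exact neg_neg_of_pos (mul_self_pos.2 hdet)
  exact ⟨z, nonneg_of_vecMul_nonpos hoff hdef fun i => (hzA i).le, hzA⟩

end Matrix

section Antinef

variable {s r : ℕ} {N : Matrix (Fin s) (Fin s) ℤ}

theorem interZ_eq_vecMul (N : Matrix (Fin s) (Fin s) ℤ) (D : Fin s → ℤ) :
    interZ N D = D ᵥ* N := rfl

theorem Antinef.inf (hoff : ∀ i j : Fin s, i ≠ j → 0 ≤ N i j) {A B : Fin s → ℤ}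
    (hA : Antinef r N A) (hB : Antinef r N B) : Antinef r N (A ⊓ B) := by
  intro i hi
  have hcol : ∀ j, j ≠ i → 0 ≤ N j i := fun j hj => hoff j i hj
  rcases le_total (A i) (B i) with h | h
  · exact (vecMul_apply_le_of_le_of_eq hcol inf_le_left (inf_eq_left.2 h)).trans (hA i hi)
  · exact (vecMul_apply_le_of_le_of_eq hcol inf_le_right (inf_eq_right.2 h)).trans (hB i hi)

theorem dotProduct_mulVec_exceptional_neg
    (hneg : ∀ x : Fin s → ℚ, (∀ i : Fin s, r ≤ (i : ℕ) → x i = 0) → x ≠ 0 →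
      (∑ i, ∑ j, x i * x j * (N i j : ℚ)) < 0)
    (w : {i : Fin s // (i : ℕ) < r} → ℤ) (hw : w ≠ 0) :
    w ⬝ᵥ N.submatrix Subtype.val Subtype.val *ᵥ w < 0 := by
  set x : Fin s → ℚ := Function.extend Subtype.val (fun a => (w a : ℚ)) 0
  have hsupp : ∀ i : Fin s, r ≤ (i : ℕ) → x i = 0 := fun i hi =>
    Function.extend_apply' _ _ _ (by rintro ⟨a, rfl⟩; exact absurd a.2 (not_lt.2 hi))
  have hx : x ≠ 0 := fun h => hw <| funext fun a => by
    simpa [x, Subtype.val_injective.extend_apply] using congrFun h a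
  have hform : ∑ i, ∑ j, x i * x j * (N i j : ℚ) =
      ((w ⬝ᵥ N.submatrix Subtype.val Subtype.val *ᵥ w : ℤ) : ℚ) :=
    calc _ = x ⬝ᵥ N.map Int.cast *ᵥ x := by
          simp only [dotProduct, mulVec, map_apply, Finset.mul_sum]
          exact Finset.sum_congr rfl fun i _ => Finset.sum_congr rfl fun j _ => by ring
      _ = (fun a => (w a : ℚ)) ⬝ᵥ
            (N.map Int.cast).submatrix Subtype.val Subtype.val *ᵥ (fun a => (w a : ℚ)) :=
          extend_subtype_val_dotProduct_mulVec _ _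
      _ = _ := by push_cast [dotProduct, mulVec]; rfl
  exact_mod_cast hform ▸ hneg x hsupp hx

theorem exists_nonneg_interZ_neg (hoff : ∀ i j : Fin s, i ≠ j → 0 ≤ N i j)
    (hneg : ∀ x : Fin s → ℚ, (∀ i : Fin s, r ≤ (i : ℕ) → x i = 0) → x ≠ 0 →
      (∑ i, ∑ j, x i * x j * (N i j : ℚ)) < 0) :
    ∃ Z : Fin s → ℤ, 0 ≤ Z ∧ ∀ i : Fin s, (i : ℕ) < r → interZ N Z i < 0 := by
  obtain ⟨z, hz0, hz⟩ := exists_nonneg_vecMul_neg (A := N.submatrix Subtype.val Subtype.val)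
    (fun a b hab => hoff _ _ (Subtype.val_injective.ne hab))
    (dotProduct_mulVec_exceptional_neg hneg)
  refine ⟨Function.extend Subtype.val z 0, fun i => ?_, fun i hi => ?_⟩
  · rw [Function.extend_def]
    split_ifs
    exacts [hz0 _, le_rfl]
  · have := hz ⟨i, hi⟩
    rw [← extend_subtype_val_vecMul_apply] at this
    exact this

theorem exists_antinef_ge (hoff : ∀ i j : Fin s, i ≠ j → 0 ≤ N i j)
    (hneg : ∀ x : Fin s → ℚ, (∀ i : Fin s, r ≤ (i : ℕ) → x i = 0) → x ≠ 0 →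
      (∑ i, ∑ j, x i * x j * (N i j : ℚ)) < 0)
    (D : Fin s → ℚ) : ∃ C : Fin s → ℤ, Antinef r N C ∧ ∀ i, D i ≤ (C i : ℚ) := by
  obtain ⟨Z, hZ0, hZ⟩ := exists_nonneg_interZ_neg hoff hneg
  set C₀ : Fin s → ℤ := fun i => ⌈D i⌉
  obtain ⟨M, hM⟩ := Finite.exists_le fun i => (interZ N C₀ i).toNat
  refine ⟨C₀ + (M : ℤ) • Z, fun i hi => ?_, fun i => ?_⟩
  · have hlin : interZ N (C₀ + (M : ℤ) • Z) i = interZ N C₀ i + M * interZ N Z i := by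
      simp only [interZ_eq_vecMul, add_vecMul, smul_vecMul, Pi.add_apply, Pi.smul_apply,
        smul_eq_mul]
    have hC₀ : interZ N C₀ i ≤ M := (Int.self_le_toNat _).trans (Int.ofNat_le.2 (hM i))
    nlinarith [hZ i hi]
  · have : (0 : ℤ) ≤ M * Z i := mul_nonneg M.cast_nonneg (hZ0 i)
    calc D i ≤ ⌈D i⌉ := Int.le_ceil _
      _ ≤ ((C₀ + (M : ℤ) • Z) i : ℤ) := by exact_mod_cast le_add_of_nonneg_right this

end Antinef

theorem antinef_closure_exists_unique_general
    (s r : ℕ)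
    (N : Matrix (Fin s) (Fin s) ℤ)
    (hoff : ∀ i j : Fin s, i ≠ j → 0 ≤ N i j)
    (hneg : ∀ x : Fin s → ℚ, (∀ i : Fin s, r ≤ (i : ℕ) → x i = 0) → x ≠ 0 →
      (∑ i, ∑ j, x i * x j * (N i j : ℚ)) < 0)
    (D : Fin s → ℚ) :
    ∃! Dt : Fin s → ℤ,
      Antinef r N Dt ∧ (∀ i, D i ≤ (Dt i : ℚ)) ∧
        ∀ D' : Fin s → ℤ, Antinef r N D' → (∀ i, D i ≤ (D' i : ℚ)) → Dt ≤ D' := by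
  set S := {C : Fin s → ℤ | Antinef r N C ∧ ∀ i, D i ≤ (C i : ℚ)}
  have hS : InfClosed S := fun A hA B hB =>
    ⟨hA.1.inf hoff hB.1, fun i => by simpa using le_min (hA.2 i) (hB.2 i)⟩
  have hbdd : BddBelow S := ⟨fun i => ⌈D i⌉, fun C hC i => Int.ceil_le.2 (hC.2 i)⟩
  obtain ⟨Dt, hDt⟩ := hS.exists_isLeast (exists_antinef_ge hoff hneg D) hbdd
  refine ⟨Dt, ⟨hDt.1.1, hDt.1.2, fun D' h₁ h₂ => hDt.2 ⟨h₁, h₂⟩⟩, fun D' hD' => ?_⟩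
  exact (hDt.unique ⟨⟨hD'.1, hD'.2.1⟩, fun C hC => hD'.2.2 C hC.1 hC.2⟩).symm

/-- For every rational divisor `D` the set of integral antinef divisors
lying entrywise above `D` is nonempty and has a (unique) least element, the antinef
closure of `D`. -/
theorem antinef_closure_exists_unique
    (s r : ℕ) (hr : 1 ≤ r) (hrs : r ≤ s)
    (N : Matrix (Fin s) (Fin s) ℤ)
    (hsym : ∀ i j, N i j = N j i)
    (hoff : ∀ i j : Fin s, i ≠ j → 0 ≤ N i j)
    (hneg : ∀ x : Fin s → ℚ, (∀ i : Fin s, r ≤ (i : ℕ) → x i = 0) → x ≠ 0 →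
      (∑ i, ∑ j, x i * x j * (N i j : ℚ)) < 0)
    (D : Fin s → ℚ) :
    ∃! Dt : Fin s → ℤ,
      Antinef r N Dt ∧ (∀ i, D i ≤ (Dt i : ℚ)) ∧
        ∀ D' : Fin s → ℤ, Antinef r N D' → (∀ i, D i ≤ (D' i : ℚ)) → Dt ≤ D' :=
  antinef_closure_exists_unique_general s r N hoff hneg D
end

section
/- Let D be an integral divisor and let D' := D + Σ_{i∈Θ} n_i·E_i be the result of one unloading step applied to D. Then D ≤ D' ≤ D̃, and D' has the same antinef closure as D. -/
open scoped BigOperators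

/-- One unloading step: on every exceptional index with negative excess
(`0 < D · E i`), add `n i = ⌈(D·E i)/(-N i i)⌉` times `E i`. -/
def unload {s : ℕ} (r : ℕ) (N : Matrix (Fin s) (Fin s) ℤ) (D : Fin s → ℤ) :
    Fin s → ℤ :=
  fun i =>
    if (i : ℕ) < r ∧ 0 < interZ N D i then
      D i + ⌈(interZ N D i : ℚ) / (-(N i i : ℚ))⌉
    else D i

/-!
If `D ≤ D'` with `D'` antinef, then for an exceptional `i` the nonnegativity of the
off-diagonal entries gives `D·Eᵢ + (D'ᵢ - Dᵢ) Nᵢᵢ ≤ D'·Eᵢ ≤ 0`, i.e. `D'ᵢ - Dᵢ ≥ (D·Eᵢ)/(-Nᵢᵢ)`;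
so one unloading step never overshoots an antinef divisor above `D`, in particular `D̃`.
Since `D ≤ D' ≤ D̃`, the integral antinef divisors above `D'` are exactly those above `D`.
-/

lemma diag_neg_of_negDef {s r : ℕ} {N : Matrix (Fin s) (Fin s) ℤ}
    (hneg : ∀ x : Fin s → ℚ, (∀ i : Fin s, r ≤ (i : ℕ) → x i = 0) → x ≠ 0 →
      (∑ i, ∑ j, x i * x j * (N i j : ℚ)) < 0)
    (i : Fin s) (hi : (i : ℕ) < r) : N i i < 0 := by
  have h := hneg (Pi.single i 1)
    (fun j hj => Pi.single_eq_of_ne (by rintro rfl; omega) _)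
    (Pi.single_ne_zero_iff.mpr one_ne_zero)
  simpa [Pi.single_apply, ite_mul] using h

lemma Int.ceil_div_le_of_le_mul {a b n : ℤ} (hb : 0 < b) (h : a ≤ n * b) :
    ⌈(a : ℚ) / b⌉ ≤ n := by
  rw [Int.ceil_le, div_le_iff₀ (by exact_mod_cast hb)]
  exact_mod_cast h

section Intersection

variable {s : ℕ} (N : Matrix (Fin s) (Fin s) ℤ)

lemma interZ_sub (D D' : Fin s → ℤ) (i : Fin s) :
    interZ N D' i - interZ N D i = interZ N (D' - D) i := by
  simp only [interZ, Pi.sub_apply, sub_mul, Finset.sum_sub_distrib]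

lemma mul_diag_le_interZ {E : Fin s → ℤ} (hE : 0 ≤ E) {i : Fin s}
    (hoff : ∀ j, j ≠ i → 0 ≤ N j i) : E i * N i i ≤ interZ N E i := by
  rw [interZ, ← Finset.add_sum_erase _ _ (Finset.mem_univ i), le_add_iff_nonneg_right]
  exact Finset.sum_nonneg fun j hj => mul_nonneg (hE j) (hoff j (Finset.ne_of_mem_erase hj))

end Intersection

section Unloading

variable {s r : ℕ} {N : Matrix (Fin s) (Fin s) ℤ}

lemma le_unload (hdiag : ∀ i : Fin s, (i : ℕ) < r → N i i < 0) (D : Fin s → ℤ) :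
    D ≤ unload r N D := by
  intro i
  unfold unload
  split_ifs with h
  · have hNii : (0 : ℚ) < -(N i i : ℚ) := neg_pos.mpr (Int.cast_lt_zero.mpr (hdiag i h.1))
    have hexcess : (0 : ℚ) < interZ N D i := by exact_mod_cast h.2
    have := Int.ceil_nonneg (div_pos hexcess hNii).le
    linarith
  · exact le_rfl

lemma unload_le_of_antinef (hoff : ∀ i j : Fin s, i ≠ j → 0 ≤ N i j)
    (hdiag : ∀ i : Fin s, (i : ℕ) < r → N i i < 0)
    {D D' : Fin s → ℤ} (hDD' : D ≤ D') (hD' : Antinef r N D') :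
    unload r N D ≤ D' := by
  intro i
  unfold unload
  split_ifs with h
  · have hdiff := mul_diag_le_interZ N (sub_nonneg.mpr hDD') (i := i) (fun j hj => hoff j i hj)
    rw [← interZ_sub, Pi.sub_apply] at hdiff
    have hstep : interZ N D i ≤ (D' i - D i) * -N i i := by linarith [hD' i h.1]
    have := Int.ceil_div_le_of_le_mul (neg_pos.mpr (hdiag i h.1)) hstep
    push_cast at this
    linarith
  · exact hDD' i

end Unloading

lemma IsAntinefClosure.of_le_of_le {s r : ℕ} {N : Matrix (Fin s) (Fin s) ℤ}
    {D E : Fin s → ℚ} {Dt : Fin s → ℤ} (hDt : IsAntinefClosure r N D Dt)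
    (hDE : D ≤ E) (hEDt : ∀ i, E i ≤ (Dt i : ℚ)) : IsAntinefClosure r N E Dt :=
  ⟨hDt.1, hEDt, fun D' hD' hED' => hDt.2.2 D' hD' fun i => (hDE i).trans (hED' i)⟩

theorem unload_step_le_and_same_closure_general
    (s r : ℕ)
    (N : Matrix (Fin s) (Fin s) ℤ)
    (hoff : ∀ i j : Fin s, i ≠ j → 0 ≤ N i j)
    (hneg : ∀ x : Fin s → ℚ, (∀ i : Fin s, r ≤ (i : ℕ) → x i = 0) → x ≠ 0 →
      (∑ i, ∑ j, x i * x j * (N i j : ℚ)) < 0)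
    (D : Fin s → ℤ) (Dt : Fin s → ℤ)
    (hDt : IsAntinefClosure r N (fun i => (D i : ℚ)) Dt) :
    D ≤ unload r N D ∧ unload r N D ≤ Dt ∧
      IsAntinefClosure r N (fun i => (unload r N D i : ℚ)) Dt := by
  have hdiag := diag_neg_of_negDef hneg
  have hD_le_Dt : D ≤ Dt := fun i => Int.cast_le.mp (hDt.2.1 i)
  have hle : D ≤ unload r N D := le_unload hdiag D
  have hle_Dt : unload r N D ≤ Dt := unload_le_of_antinef hoff hdiag hD_le_Dt hDt.1
  exact ⟨hle, hle_Dt, hDt.of_le_of_le (fun i => Int.cast_le.mpr (hle i))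
    (fun i => Int.cast_le.mpr (hle_Dt i))⟩

/-- Let `D'` be the result of one unloading step applied to the
integral divisor `D`.  Then `D ≤ D' ≤ D̃`, and `D'` has the same antinef closure
`D̃` as `D`. -/
theorem unload_step_le_and_same_closure
    (s r : ℕ) (hr : 1 ≤ r) (hrs : r ≤ s)
    (N : Matrix (Fin s) (Fin s) ℤ)
    (hsym : ∀ i j, N i j = N j i)
    (hoff : ∀ i j : Fin s, i ≠ j → 0 ≤ N i j)
    (hneg : ∀ x : Fin s → ℚ, (∀ i : Fin s, r ≤ (i : ℕ) → x i = 0) → x ≠ 0 →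
      (∑ i, ∑ j, x i * x j * (N i j : ℚ)) < 0)
    (D : Fin s → ℤ) (Dt : Fin s → ℤ)
    (hDt : IsAntinefClosure r N (fun i => (D i : ℚ)) Dt) :
    D ≤ unload r N D ∧ unload r N D ≤ Dt ∧
      IsAntinefClosure r N (fun i => (unload r N D i : ℚ)) Dt :=
  unload_step_le_and_same_closure_general s r N hoff hneg D Dt hDt
end

section
/- Let D_1 ≤ D_2 be integral divisors. Then their antinef closures coincide, D̃_1 = D̃_2, if and only if D̃_1 ≥ D_2. -/
open scoped BigOperators

namespace IsAntinefClosure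

variable {s r : ℕ} {N : Matrix (Fin s) (Fin s) ℤ} {Dt : Fin s → ℤ}

theorem le_of_antinef {D : Fin s → ℚ} (h : IsAntinefClosure r N D Dt) {D' : Fin s → ℤ}
    (hD' : Antinef r N D') (hle : ∀ i, D i ≤ (D' i : ℚ)) : Dt ≤ D' :=
  h.2.2 D' hD' hle

theorem mono {D₁ D₂ : Fin s → ℚ} {Dt₂ : Fin s → ℤ} (h12 : D₁ ≤ D₂)
    (h₁ : IsAntinefClosure r N D₁ Dt) (h₂ : IsAntinefClosure r N D₂ Dt₂) : Dt ≤ Dt₂ :=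
  h₁.le_of_antinef h₂.1 fun i => (h12 i).trans (h₂.2.1 i)

theorem self_le {D : Fin s → ℤ} (h : IsAntinefClosure r N (fun i => (D i : ℚ)) Dt) : D ≤ Dt :=
  fun i => Int.cast_le.mp (h.2.1 i)

end IsAntinefClosure

theorem closure_eq_iff_closure_ge_general
    (s r : ℕ)
    (N : Matrix (Fin s) (Fin s) ℤ)
    (D₁ D₂ : Fin s → ℤ) (h12 : D₁ ≤ D₂)
    (Dt₁ Dt₂ : Fin s → ℤ)
    (hDt₁ : IsAntinefClosure r N (fun i => (D₁ i : ℚ)) Dt₁)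
    (hDt₂ : IsAntinefClosure r N (fun i => (D₂ i : ℚ)) Dt₂) :
    Dt₁ = Dt₂ ↔ D₂ ≤ Dt₁ := by
  constructor
  · rintro rfl
    exact hDt₂.self_le
  · intro h21
    apply le_antisymm
    · exact hDt₁.mono (fun i => Int.cast_le.mpr (h12 i)) hDt₂
    · exact hDt₂.le_of_antinef hDt₁.1 fun i => Int.cast_le.mpr (h21 i)

/-- For integral divisors `D₁ ≤ D₂`, the antinef closures coincide,
`D̃₁ = D̃₂`, if and only if `D̃₁ ≥ D₂`. -/
theorem closure_eq_iff_closure_ge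
    (s r : ℕ) (hr : 1 ≤ r) (hrs : r ≤ s)
    (N : Matrix (Fin s) (Fin s) ℤ)
    (hsym : ∀ i j, N i j = N j i)
    (hoff : ∀ i j : Fin s, i ≠ j → 0 ≤ N i j)
    (hneg : ∀ x : Fin s → ℚ, (∀ i : Fin s, r ≤ (i : ℕ) → x i = 0) → x ≠ 0 →
      (∑ i, ∑ j, x i * x j * (N i j : ℚ)) < 0)
    (D₁ D₂ : Fin s → ℤ) (h12 : D₁ ≤ D₂)
    (Dt₁ Dt₂ : Fin s → ℤ)
    (hDt₁ : IsAntinefClosure r N (fun i => (D₁ i : ℚ)) Dt₁)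
    (hDt₂ : IsAntinefClosure r N (fun i => (D₂ i : ℚ)) Dt₂) :
    Dt₁ = Dt₂ ↔ D₂ ≤ Dt₁ :=
  closure_eq_iff_closure_ge_general s r N D₁ D₂ h12 Dt₁ Dt₂ hDt₁ hDt₂
end

section
/- Let D_1 ≤ D_2 be integral divisors. Then D̃_1 < D̃_2 (meaning D̃_1 ≤ D̃_2 and D̃_1 ≠ D̃_2) if and only if v_i(D̃_1) < v_i(D_2) for some index i. -/
open scoped BigOperators

namespace IsAntinefClosure

variable {s r : ℕ} {N : Matrix (Fin s) (Fin s) ℤ} {D D' : Fin s → ℚ} {Dt Dt' E : Fin s → ℤ}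

theorem le_iff_forall_le (h : IsAntinefClosure r N D Dt) (hE : Antinef r N E) :
    Dt ≤ E ↔ ∀ i, D i ≤ E i :=
  ⟨fun hle i => (h.2.1 i).trans (by exact_mod_cast hle i), h.2.2 E hE⟩

theorem mono_s4 (h : IsAntinefClosure r N D Dt) (h' : IsAntinefClosure r N D' Dt') (hD : D ≤ D') :
    Dt ≤ Dt' :=
  (h.le_iff_forall_le h'.1).2 fun i => (hD i).trans (h'.2.1 i)

end IsAntinefClosure

theorem closure_lt_iff_exists_lt_general
    (s r : ℕ)
    (N : Matrix (Fin s) (Fin s) ℤ)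
    (D₁ D₂ : Fin s → ℤ) (h12 : D₁ ≤ D₂)
    (Dt₁ Dt₂ : Fin s → ℤ)
    (hDt₁ : IsAntinefClosure r N (fun i => (D₁ i : ℚ)) Dt₁)
    (hDt₂ : IsAntinefClosure r N (fun i => (D₂ i : ℚ)) Dt₂) :
    (Dt₁ ≤ Dt₂ ∧ Dt₁ ≠ Dt₂) ↔ ∃ i, Dt₁ i < D₂ i := by
  have hle : Dt₁ ≤ Dt₂ := hDt₁.mono_s4 hDt₂ fun i => Int.cast_le.mpr (h12 i)
  rw [← lt_iff_le_and_ne, lt_iff_le_not_ge, hDt₂.le_iff_forall_le hDt₁.1]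
  simp only [hle, true_and, not_forall, not_le, Int.cast_lt]

/-- For integral divisors `D₁ ≤ D₂`, one has `D̃₁ < D̃₂`
(i.e. `D̃₁ ≤ D̃₂` and `D̃₁ ≠ D̃₂`) if and only if `v_i(D̃₁) < v_i(D₂)` for some `i`. -/
theorem closure_lt_iff_exists_lt
    (s r : ℕ) (hr : 1 ≤ r) (hrs : r ≤ s)
    (N : Matrix (Fin s) (Fin s) ℤ)
    (hsym : ∀ i j, N i j = N j i)
    (hoff : ∀ i j : Fin s, i ≠ j → 0 ≤ N i j)
    (hneg : ∀ x : Fin s → ℚ, (∀ i : Fin s, r ≤ (i : ℕ) → x i = 0) → x ≠ 0 →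
      (∑ i, ∑ j, x i * x j * (N i j : ℚ)) < 0)
    (D₁ D₂ : Fin s → ℤ) (h12 : D₁ ≤ D₂)
    (Dt₁ Dt₂ : Fin s → ℤ)
    (hDt₁ : IsAntinefClosure r N (fun i => (D₁ i : ℚ)) Dt₁)
    (hDt₂ : IsAntinefClosure r N (fun i => (D₂ i : ℚ)) Dt₂) :
    (Dt₁ ≤ Dt₂ ∧ Dt₁ ≠ Dt₂) ↔ ∃ i, Dt₁ i < D₂ i :=
  closure_lt_iff_exists_lt_general s r N D₁ D₂ h12 Dt₁ Dt₂ hDt₁ hDt₂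
end

section
/- Let λ' ∈ ℚ with λ' > 0 and write e_i^{λ'} := v_i(D_{λ'}). Set λ := min_{1≤i≤s} (k_i + 1 + e_i^{λ'})/e_i. Then λ' < λ, D_c = D_{λ'} for every rational c with λ' ≤ c < λ, and D_λ ≠ D_{λ'}; that is, λ is the jumping number consecutive to λ'. -/
open scoped BigOperators

/-!
Coordinatewise, `⌊c e_i - k_i⌋ ≤ e_i^{λ'}` holds exactly when `c < (k_i + 1 + e_i^{λ'}) / e_i`,
so `λ` is the least `c` for which `⌊cF - K⌋ ≤ D_{λ'}` fails. For `λ' ≤ c < λ` the closure `D_c`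
is then squeezed: `D_{λ'} ≤ D_c` by monotonicity of the closure, and `D_c ≤ D_{λ'}` by
minimality of `D_c`. At `c = λ` some entry of `⌊λF - K⌋` exceeds `D_{λ'}`, so `D_λ ≠ D_{λ'}`.
-/

section FloorThreshold

variable {α : Type*} [Field α] [LinearOrder α] [IsStrictOrderedRing α] [FloorRing α]

theorem floor_mul_sub_le_iff_lt_div {c f k : α} (hf : 0 < f) (n : ℤ) :
    ⌊c * f - k⌋ ≤ n ↔ c < (k + 1 + n) / f := by
  rw [Int.floor_le_iff, lt_div_iff₀ hf]
  constructor <;> intro h <;> linarith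

theorem floor_mul_sub_mono {c c' f : α} (k : α) (hc : c ≤ c') (hf : 0 ≤ f) :
    ⌊c * f - k⌋ ≤ ⌊c' * f - k⌋ :=
  Int.floor_mono (by gcongr)

end FloorThreshold

namespace IsAntinefClosure

variable {s r : ℕ} {N : Matrix (Fin s) (Fin s) ℤ} {D D' : Fin s → ℚ} {A B : Fin s → ℤ}

theorem mono_s6 (hA : IsAntinefClosure r N D A) (hB : IsAntinefClosure r N D' B)
    (h : ∀ i, D i ≤ D' i) : ∀ i, A i ≤ B i :=
  hA.2.2 B hB.1 fun i => (h i).trans (hB.2.1 i)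

theorem eq_of_le_of_le (hA : IsAntinefClosure r N D A) (hB : IsAntinefClosure r N D' B)
    (hDD' : ∀ i, D i ≤ D' i) (hD'A : ∀ i, D' i ≤ A i) : B = A :=
  funext fun i => le_antisymm (hB.2.2 A hA.1 hD'A i) (hA.mono_s6 hB hDD' i)

end IsAntinefClosure

theorem next_jumping_number_general
    (s r : ℕ)
    (N : Matrix (Fin s) (Fin s) ℤ)
    (F : Fin s → ℤ) (hF1 : ∀ i, 1 ≤ F i)
    (K : Fin s → ℚ)
    (lam' : ℚ)
    (Dl' : Fin s → ℤ)
    (hDl' : IsAntinefClosure r N (fun i => (⌊lam' * (F i : ℚ) - K i⌋ : ℚ)) Dl')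
    (lam : ℚ)
    (hlam_le : ∀ i, lam ≤ (K i + 1 + (Dl' i : ℚ)) / (F i : ℚ))
    (hlam_mem : ∃ i, lam = (K i + 1 + (Dl' i : ℚ)) / (F i : ℚ)) :
    lam' < lam ∧
      (∀ c : ℚ, lam' ≤ c → c < lam →
        ∀ Dc : Fin s → ℤ,
          IsAntinefClosure r N (fun i => (⌊c * (F i : ℚ) - K i⌋ : ℚ)) Dc → Dc = Dl') ∧
      (∀ Dl : Fin s → ℤ,
        IsAntinefClosure r N (fun i => (⌊lam * (F i : ℚ) - K i⌋ : ℚ)) Dl → Dl ≠ Dl') := by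
  have hF : ∀ i, (0 : ℚ) < F i := fun i => Int.cast_pos.mpr (hF1 i)
  have below : ∀ c i, ⌊c * (F i : ℚ) - K i⌋ ≤ Dl' i ↔ c < (K i + 1 + Dl' i) / F i :=
    fun c i => floor_mul_sub_le_iff_lt_div (hF i) _
  obtain ⟨i₀, hi₀⟩ := hlam_mem
  refine ⟨hi₀ ▸ (below lam' i₀).1 (Int.cast_le.mp (hDl'.2.1 i₀)), ?_, ?_⟩
  · intro c hc hclam Dc hDc
    refine hDl'.eq_of_le_of_le hDc (fun i => ?_) (fun i => ?_)
    · exact_mod_cast floor_mul_sub_mono _ hc (hF i).le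
    · exact_mod_cast (below c i).2 (hclam.trans_le (hlam_le i))
  · rintro Dl hDl rfl
    exact ((below lam i₀).1 (Int.cast_le.mp (hDl.2.1 i₀))).ne hi₀

/-- **Theorem `lct_ideal`.** Given `λ' > 0` and the antinef closure
`D_{λ'}` of `⌊λ'F − K⌋`, the rational number
`λ = min_i (k_i + 1 + e_i^{λ'}) / e_i` is the jumping number consecutive to `λ'`:
`λ' < λ`, `D_c = D_{λ'}` for every `λ' ≤ c < λ`, and `D_λ ≠ D_{λ'}`. -/
theorem next_jumping_number
    (s r : ℕ) (hr : 1 ≤ r) (hrs : r ≤ s)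
    (N : Matrix (Fin s) (Fin s) ℤ)
    (hsym : ∀ i j, N i j = N j i)
    (hoff : ∀ i j : Fin s, i ≠ j → 0 ≤ N i j)
    (hneg : ∀ x : Fin s → ℚ, (∀ i : Fin s, r ≤ (i : ℕ) → x i = 0) → x ≠ 0 →
      (∑ i, ∑ j, x i * x j * (N i j : ℚ)) < 0)
    (F : Fin s → ℤ) (hF1 : ∀ i, 1 ≤ F i) (hFanti : Antinef r N F)
    (K : Fin s → ℚ) (hKaff : ∀ i : Fin s, r ≤ (i : ℕ) → K i = 0)
    (hKexc : ∀ i : Fin s, (i : ℕ) < r →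
      (∑ j, K j * (N j i : ℚ)) + (N i i : ℚ) = -2)
    (lam' : ℚ) (hl0 : 0 < lam')
    (Dl' : Fin s → ℤ)
    (hDl' : IsAntinefClosure r N (fun i => (⌊lam' * (F i : ℚ) - K i⌋ : ℚ)) Dl')
    (lam : ℚ)
    (hlam_le : ∀ i, lam ≤ (K i + 1 + (Dl' i : ℚ)) / (F i : ℚ))
    (hlam_mem : ∃ i, lam = (K i + 1 + (Dl' i : ℚ)) / (F i : ℚ)) :
    lam' < lam ∧
      (∀ c : ℚ, lam' ≤ c → c < lam →
        ∀ Dc : Fin s → ℤ,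
          IsAntinefClosure r N (fun i => (⌊c * (F i : ℚ) - K i⌋ : ℚ)) Dc → Dc = Dl') ∧
      (∀ Dl : Fin s → ℤ,
        IsAntinefClosure r N (fun i => (⌊lam * (F i : ℚ) - K i⌋ : ℚ)) Dl → Dl ≠ Dl') :=
  next_jumping_number_general s r N F hF1 K lam' Dl' hDl' lam hlam_le hlam_mem
end

section
/- Let 0 ≤ λ' < λ be consecutive jumping values. Then every reduced (0/1-valued) divisor G with G_λ ≤ G ≤ H_λ is a jumping divisor for λ; that is, the antinef closure of ⌊λF − K⌋ − G equals D_{λ'}. -/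
open scoped BigOperators

/-!
Write `t_i = λ e_i − k_i`. Every `D_c` with `λ' ≤ c < λ` equals `D_{λ'}`, and taking `c` just below
`λ` shows `⌈t_i⌉ − 1 ≤ e_i^{λ'}`. Hence `⌊t_i⌋ − G_i ≤ e_i^{λ'}`: the only way this can fail
with `G_i = 0` is `t_i = e_i^{λ'} + 1`, which puts `i` in the support of `G_λ ≤ G`. Conversely
`⌊λ' e_i − k_i⌋ ≤ ⌊t_i⌋ − G_i`, since on the support of `G ≤ H_λ` the number `t_i` is an integer
and `λ' e_i − k_i < t_i`. So `⌊λ'F − K⌋ ≤ ⌊λF − K⌋ − G ≤ D_{λ'}`, and a divisor squeezed between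
a divisor and its antinef closure has the same antinef closure.
-/

theorem IsAntinefClosure.of_le_of_le_s10 {s r : ℕ} {N : Matrix (Fin s) (Fin s) ℤ} {A B : Fin s → ℚ}
    {Dt : Fin s → ℤ} (h : IsAntinefClosure r N A Dt) (hAB : ∀ i, A i ≤ B i)
    (hB : ∀ i, B i ≤ Dt i) : IsAntinefClosure r N B Dt :=
  ⟨h.1, hB, fun D' hD' hBD' => h.2.2 D' hD' fun i => (hAB i).trans (hBD' i)⟩

section FloorCeil

variable {α : Type*} [Field α] [LinearOrder α] [IsStrictOrderedRing α] [FloorRing α]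

theorem exists_mem_Ico_ceil_sub_one_le_floor {lam' lam f : α} (k : α) (hf : 0 < f)
    (hll : lam' < lam) :
    ∃ c ∈ Set.Ico lam' lam, ⌈lam * f - k⌉ - 1 ≤ ⌊c * f - k⌋ := by
  set n : ℤ := ⌈lam * f - k⌉ - 1
  have hn : (n : α) < lam * f - k := by
    have := Int.ceil_lt_add_one (lam * f - k)
    push_cast [n]
    linarith
  refine ⟨max lam' ((n + k) / f), ⟨le_max_left _ _, max_lt hll ?_⟩, Int.le_floor.mpr ?_⟩
  · rw [div_lt_iff₀ hf]
    linarith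
  · have := (div_le_iff₀ hf).mp (le_max_right lam' ((n + k) / f))
    linarith

theorem floor_sub_le_of_ceil_sub_one_le {t : α} {d g : ℤ} (hd : ⌈t⌉ - 1 ≤ d)
    (hg : g = 0 ∨ g = 1) (hgt : t = d + 1 → g = 1) : ⌊t⌋ - g ≤ d := by
  have := Int.floor_le_ceil t
  rcases hg with rfl | rfl
  · by_contra! hlt
    have hlow : (d + 1 : α) ≤ t := by exact_mod_cast Int.le_floor.mp (show d + 1 ≤ ⌊t⌋ by omega)
    have hup : t ≤ (d + 1 : α) := by exact_mod_cast Int.ceil_le.mp (show ⌈t⌉ ≤ d + 1 by omega)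
    exact absurd (hgt (le_antisymm hup hlow)) (by norm_num)
  · omega

theorem floor_le_floor_sub_of_lt {lam' lam f k : α} {g : ℤ} (hf : 0 < f) (hll : lam' < lam)
    (hg : g = 0 ∨ g = 1) (hint : g = 1 → ∃ m : ℤ, lam * f - k = m) :
    ⌊lam' * f - k⌋ ≤ ⌊lam * f - k⌋ - g := by
  have hlt : lam' * f - k < lam * f - k := by linarith [mul_lt_mul_of_pos_right hll hf]
  rcases hg with rfl | rfl
  · simpa using Int.floor_le_floor hlt.le
  · obtain ⟨m, hm⟩ := hint rfl
    rw [hm, Int.floor_intCast, Int.le_sub_one_iff, Int.floor_lt, ← hm]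
    exact hlt

end FloorCeil

theorem interval_of_jumping_divisors_general
    (s r : ℕ)
    (N : Matrix (Fin s) (Fin s) ℤ)
    (F : Fin s → ℤ) (hF1 : ∀ i, 1 ≤ F i)
    (K : Fin s → ℚ)
    (lam' lam : ℚ) (hll : lam' < lam)
    (Dl' : Fin s → ℤ)
    (hconsec : ∀ c : ℚ, lam' ≤ c → c < lam →
      IsAntinefClosure r N (fun i => (⌊c * (F i : ℚ) - K i⌋ : ℚ)) Dl')
    (Gl : Fin s → ℤ)
    (hGl : ∀ i, Gl i = if lam * (F i : ℚ) = K i + 1 + (Dl' i : ℚ) then 1 else 0)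
    (G : Fin s → ℤ) (hGred : ∀ i, G i = 0 ∨ G i = 1)
    (hGlG : Gl ≤ G)
    (hGH : ∀ i, G i = 1 → ∃ m : ℤ, 0 < m ∧ lam * (F i : ℚ) - K i = (m : ℚ)) :
    IsAntinefClosure r N (fun i => ((⌊lam * (F i : ℚ) - K i⌋ - G i : ℤ) : ℚ)) Dl' := by
  have hF : ∀ i, (0 : ℚ) < F i := fun i => by exact_mod_cast hF1 i
  have hceil : ∀ i, ⌈lam * (F i : ℚ) - K i⌉ - 1 ≤ Dl' i := fun i => by
    obtain ⟨c, ⟨hc', hc⟩, hle⟩ := exists_mem_Ico_ceil_sub_one_le_floor (K i) (hF i) hll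
    exact hle.trans (Int.cast_le.mp ((hconsec c hc' hc).2.1 i))
  have hG_eq_one : ∀ i, lam * (F i : ℚ) - K i = Dl' i + 1 → G i = 1 := fun i ht => by
    have hGl1 : Gl i = 1 := by rw [hGl i, if_pos (by linarith)]
    have : Gl i ≤ G i := hGlG i
    rcases hGred i with h | h <;> omega
  refine (hconsec lam' le_rfl hll).of_le_of_le_s10 (fun i => ?_) (fun i => ?_)
  · have hint : G i = 1 → ∃ m : ℤ, lam * (F i : ℚ) - K i = m := fun h =>
      (hGH i h).imp fun _ => And.right
    exact_mod_cast floor_le_floor_sub_of_lt (hF i) hll (hGred i) hint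
  · exact_mod_cast floor_sub_le_of_ceil_sub_one_le (hceil i) (hGred i) (hG_eq_one i)

/-- For consecutive jumping values `0 ≤ λ' < λ`, every reduced
divisor `G` with `G_λ ≤ G ≤ H_λ` is a jumping divisor for `λ`: the antinef closure
of `⌊λF − K⌋ − G` equals `D_{λ'}`. -/
theorem interval_of_jumping_divisors
    (s r : ℕ) (hr : 1 ≤ r) (hrs : r ≤ s)
    (N : Matrix (Fin s) (Fin s) ℤ)
    (hsym : ∀ i j, N i j = N j i)
    (hoff : ∀ i j : Fin s, i ≠ j → 0 ≤ N i j)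
    (hneg : ∀ x : Fin s → ℚ, (∀ i : Fin s, r ≤ (i : ℕ) → x i = 0) → x ≠ 0 →
      (∑ i, ∑ j, x i * x j * (N i j : ℚ)) < 0)
    (F : Fin s → ℤ) (hF1 : ∀ i, 1 ≤ F i) (hFanti : Antinef r N F)
    (K : Fin s → ℚ) (hKaff : ∀ i : Fin s, r ≤ (i : ℕ) → K i = 0)
    (hKexc : ∀ i : Fin s, (i : ℕ) < r →
      (∑ j, K j * (N j i : ℚ)) + (N i i : ℚ) = -2)
    (lam' lam : ℚ) (hl0 : 0 ≤ lam') (hll : lam' < lam)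
    (Dl' : Fin s → ℤ)
    (hconsec : ∀ c : ℚ, lam' ≤ c → c < lam →
      IsAntinefClosure r N (fun i => (⌊c * (F i : ℚ) - K i⌋ : ℚ)) Dl')
    (Dl : Fin s → ℤ)
    (hDl : IsAntinefClosure r N (fun i => (⌊lam * (F i : ℚ) - K i⌋ : ℚ)) Dl)
    (hjump : Dl ≠ Dl')
    (Gl : Fin s → ℤ)
    (hGl : ∀ i, Gl i = if lam * (F i : ℚ) = K i + 1 + (Dl' i : ℚ) then 1 else 0)
    (G : Fin s → ℤ) (hGred : ∀ i, G i = 0 ∨ G i = 1)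
    (hGlG : Gl ≤ G)
    (hGH : ∀ i, G i = 1 → ∃ m : ℤ, 0 < m ∧ lam * (F i : ℚ) - K i = (m : ℚ)) :
    IsAntinefClosure r N (fun i => ((⌊lam * (F i : ℚ) - K i⌋ - G i : ℤ) : ℚ)) Dl' :=
  interval_of_jumping_divisors_general s r N F hF1 K lam' lam hll Dl' hconsec Gl hGl G hGred hGlG
    hGH
end

section
/- Let 0 ≤ λ' < λ be consecutive jumping values and assume that G_λ is supported on exceptional indices. Then for every i ∈ supp G_λ one has (⌈K − λF⌉ + G_λ)·E_i = −2 + λ·ρ_i + Σ_{j adjacent to i} {λ·e_j − k_j} + a_{G_λ}(i). -/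
open scoped BigOperators

/-!
At an index `i` of `G_λ` the number `λe_i − k_i = 1 + e_i^{λ'}` is an integer, so
`⌈K − λF⌉ = K − λF + Σ_j {λe_j − k_j} E_j` has no fractional correction at `i`. Intersecting
with `E_i` and using `K·E_i = −2 − E_i²` and `−F·E_i = ρ_i`, the self-intersection `E_i²`
coming from `K` cancels the one coming from `G_λ`, while the off-diagonal entries, all `0` or
`1`, turn the remaining sums into sums over the indices adjacent to `i`.
-/

open Finset

theorem Int.cast_ceil_neg {α : Type*} [Ring α] [LinearOrder α] [IsStrictOrderedRing α]
    [FloorRing α] (x : α) : ((⌈-x⌉ : ℤ) : α) = -x + Int.fract x := by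
  rw [Int.ceil_neg, Int.cast_neg, ← Int.self_sub_fract]
  abel

theorem sum_mul_eq_diag_add_sum_adjacent {ι R : Type*} [Fintype ι] [DecidableEq ι] [CommRing R]
    (N : Matrix ι ι ℤ) (i : ι) (h01 : ∀ j, j ≠ i → N j i = 0 ∨ N j i = 1) (f : ι → R) :
    ∑ j, f j * (N j i : R) = f i * N i i + ∑ j ∈ univ.filter (fun j => j ≠ i ∧ N j i = 1), f j := by
  rw [← Fintype.sum_ite_eq' i (fun j => f j * (N j i : R)), sum_filter, ← sum_add_distrib]
  refine sum_congr rfl fun j _ => ?_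
  by_cases hj : j = i
  · simp [hj]
  · rcases h01 j hj with h | h <;> simp [hj, h]

theorem sum_intCast_eq_card_filter_of_zero_or_one {ι R : Type*} [CommRing R] (S : Finset ι)
    (g : ι → ℤ) (hg : ∀ j, g j = 0 ∨ g j = 1) :
    ∑ j ∈ S, (g j : R) = ((S.filter (fun j => g j = 1)).card : R) := by
  rw [← sum_boole]
  refine sum_congr rfl fun j _ => ?_
  rcases hg j with h | h <;> simp [h]

theorem intCast_interZ_ceil_sub_add {s : ℕ} (N : Matrix (Fin s) (Fin s) ℤ) (K : Fin s → ℚ)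
    (lam : ℚ) (F G : Fin s → ℤ) (i : Fin s) :
    ((interZ N (fun j => ⌈K j - lam * (F j : ℚ)⌉ + G j) i : ℤ) : ℚ)
      = ∑ j, K j * (N j i : ℚ) - lam * ((interZ N F i : ℤ) : ℚ)
        + ∑ j, Int.fract (lam * (F j : ℚ) - K j) * N j i + ∑ j, (G j : ℚ) * N j i := by
  have hceil : ∀ j, ((⌈K j - lam * (F j : ℚ)⌉ : ℤ) : ℚ)
      = K j - lam * F j + Int.fract (lam * (F j : ℚ) - K j) := fun j => by
    rw [← neg_sub, Int.cast_ceil_neg]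
  simp only [interZ, Int.cast_sum, Int.cast_mul, Int.cast_add, hceil, mul_sum,
    ← sum_sub_distrib, ← sum_add_distrib]
  exact sum_congr rfl fun j _ => by ring

theorem intersection_formula_minimal_jumping_divisor_general
    (s r : ℕ)
    (N : Matrix (Fin s) (Fin s) ℤ)
    (hoff01 : ∀ i j : Fin s, i ≠ j → N i j = 0 ∨ N i j = 1)
    (F : Fin s → ℤ)
    (K : Fin s → ℚ)
    (hKexc : ∀ i : Fin s, (i : ℕ) < r →
      (∑ j, K j * (N j i : ℚ)) + (N i i : ℚ) = -2)
    (lam : ℚ)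
    (Dl' : Fin s → ℤ)
    (Gl : Fin s → ℤ)
    (hGl : ∀ i, Gl i = if lam * (F i : ℚ) = K i + 1 + (Dl' i : ℚ) then 1 else 0)
    (hGlexc : ∀ i : Fin s, r ≤ (i : ℕ) → Gl i = 0) :
    ∀ i : Fin s, Gl i = 1 →
      ((interZ N (fun j => ⌈K j - lam * (F j : ℚ)⌉ + Gl j) i : ℤ) : ℚ) =
        -2 + lam * ((-interZ N F i : ℤ) : ℚ)
          + (∑ j ∈ Finset.univ.filter (fun j => j ≠ i ∧ N j i = 1),
              Int.fract (lam * (F j : ℚ) - K j))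
          + ((Finset.univ.filter (fun j => j ≠ i ∧ N j i = 1 ∧ Gl j = 1)).card : ℚ) := by
  intro i hGi
  have hexc : (i : ℕ) < r := by
    by_contra! h
    simp [hGlexc i h] at hGi
  have hfract : Int.fract (lam * (F i : ℚ) - K i) = 0 := by
    have hsupp : lam * (F i : ℚ) = K i + 1 + (Dl' i : ℚ) := by
      by_contra h
      simp [hGl i, h] at hGi
    rw [show lam * (F i : ℚ) - K i = ((1 + Dl' i : ℤ) : ℚ) by push_cast; linarith,
      Int.fract_intCast]
  have hG01 : ∀ j, Gl j = 0 ∨ Gl j = 1 := fun j => by rw [hGl j]; split <;> simp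
  have hadj := sum_mul_eq_diag_add_sum_adjacent (R := ℚ) N i (fun j hj => hoff01 j i hj)
  have hGsum : ∑ j, (Gl j : ℚ) * (N j i : ℚ) = N i i
      + ((univ.filter (fun j => j ≠ i ∧ N j i = 1 ∧ Gl j = 1)).card : ℚ) := by
    rw [hadj, sum_intCast_eq_card_filter_of_zero_or_one _ _ hG01, filter_filter, hGi]
    simp only [Int.cast_one, one_mul, and_assoc]
  rw [intCast_interZ_ceil_sub_add, hadj (fun j => Int.fract (lam * (F j : ℚ) - K j)), hfract,
    hGsum]
  push_cast
  linarith [hKexc i hexc]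

/-- **Lemma `num`.** Assume the minimal jumping divisor `G_λ` has
exceptional support.  Then for every `i` in the support of `G_λ`,
`(⌈K − λF⌉ + G_λ)·E_i = −2 + λρ_i + Σ_{j adj i} {λe_j − k_j} + a_{G_λ}(i)`. -/
theorem intersection_formula_minimal_jumping_divisor
    (s r : ℕ) (hr : 1 ≤ r) (hrs : r ≤ s)
    (N : Matrix (Fin s) (Fin s) ℤ)
    (hsym : ∀ i j, N i j = N j i)
    (hoff : ∀ i j : Fin s, i ≠ j → 0 ≤ N i j)
    (hneg : ∀ x : Fin s → ℚ, (∀ i : Fin s, r ≤ (i : ℕ) → x i = 0) → x ≠ 0 →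
      (∑ i, ∑ j, x i * x j * (N i j : ℚ)) < 0)
    (hoff01 : ∀ i j : Fin s, i ≠ j → N i j = 0 ∨ N i j = 1)
    (F : Fin s → ℤ) (hF1 : ∀ i, 1 ≤ F i) (hFanti : Antinef r N F)
    (K : Fin s → ℚ) (hKaff : ∀ i : Fin s, r ≤ (i : ℕ) → K i = 0)
    (hKexc : ∀ i : Fin s, (i : ℕ) < r →
      (∑ j, K j * (N j i : ℚ)) + (N i i : ℚ) = -2)
    (lam' lam : ℚ) (hl0 : 0 ≤ lam') (hll : lam' < lam)
    (Dl' : Fin s → ℤ)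
    (hconsec : ∀ c : ℚ, lam' ≤ c → c < lam →
      IsAntinefClosure r N (fun i => (⌊c * (F i : ℚ) - K i⌋ : ℚ)) Dl')
    (Dl : Fin s → ℤ)
    (hDl : IsAntinefClosure r N (fun i => (⌊lam * (F i : ℚ) - K i⌋ : ℚ)) Dl)
    (hjump : Dl ≠ Dl')
    (Gl : Fin s → ℤ)
    (hGl : ∀ i, Gl i = if lam * (F i : ℚ) = K i + 1 + (Dl' i : ℚ) then 1 else 0)
    (hGlexc : ∀ i : Fin s, r ≤ (i : ℕ) → Gl i = 0) :
    ∀ i : Fin s, Gl i = 1 →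
      ((interZ N (fun j => ⌈K j - lam * (F j : ℚ)⌉ + Gl j) i : ℤ) : ℚ) =
        -2 + lam * ((-interZ N F i : ℤ) : ℚ)
          + (∑ j ∈ Finset.univ.filter (fun j => j ≠ i ∧ N j i = 1),
              Int.fract (lam * (F j : ℚ) - K j))
          + ((Finset.univ.filter (fun j => j ≠ i ∧ N j i = 1 ∧ Gl j = 1)).card : ℚ) :=
  intersection_formula_minimal_jumping_divisor_general s r N hoff01 F K hKexc lam Dl' Gl hGl hGlexc
end

section
/- Let 0 ≤ λ' < λ be consecutive jumping values and assume that G_λ is supported on exceptional indices. Then (⌈K − λF⌉ + G_λ)·E_i ≥ 0 for every i ∈ supp G_λ. -/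
/-!
Put `A := ⌈K − λF⌉ + G_λ`. Since every floor `⌊cF − K⌋` with `λ' ≤ c < λ` lies below
`D_{λ'}`, one gets `⌈λF − K⌉ ≤ D_{λ'} + 1`; hence `A ≥ −D_{λ'}` entrywise, with equality on
the support of `G_λ`, which is exactly where `λF − K = D_{λ'} + 1`. For `i` in that support
only the off-diagonal entries of `A` and `−D_{λ'}` can differ, and these meet `E_i`
nonnegatively, so `A·E_i ≥ −D_{λ'}·E_i ≥ 0` because `D_{λ'}` is antinef.
-/

open scoped BigOperators

section FloorCeil

variable {α : Type*} [Field α] [LinearOrder α] [IsStrictOrderedRing α] [FloorRing α]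

theorem ceil_mul_sub_le_add_one_of_floor_le {a b f k : α} {d : ℤ} (hab : a < b) (hf : 0 < f)
    (h : ∀ c, a ≤ c → c < b → ⌊c * f - k⌋ ≤ d) : ⌈b * f - k⌉ ≤ d + 1 := by
  by_contra! hlt
  have hbf : (d : α) + 1 < b * f - k := by exact_mod_cast Int.lt_ceil.mp (by omega)
  set c := max a ((d + 1 + k) / f)
  have hc : c < b := max_lt hab ((div_lt_iff₀ hf).mpr (by linarith))
  have hcf : (d : α) + 1 ≤ c * f - k := by
    have := (div_le_iff₀ hf).mp (le_max_right a ((d + 1 + k) / f))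
    linarith
  have : d + 1 ≤ ⌊c * f - k⌋ := Int.le_floor.mpr (by exact_mod_cast hcf)
  have := h c (le_max_left _ _) hc
  omega

theorem ceil_neg_add_one_of_eq_add_one {x : α} {d : ℤ} (h : x = d + 1) : ⌈-x⌉ + 1 = -d := by
  rw [h, ← Int.cast_one, ← Int.cast_add, ← Int.cast_neg, Int.ceil_intCast]
  ring

theorem neg_le_ceil_neg_add_ite {x : α} {d : ℤ} (h : ⌈x⌉ ≤ d + 1) :
    -d ≤ ⌈-x⌉ + if x = d + 1 then 1 else 0 := by
  split_ifs with hx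
  · exact (ceil_neg_add_one_of_eq_add_one hx).ge
  · have hlt : x < d + 1 := lt_of_le_of_ne (by exact_mod_cast Int.ceil_le.mp h) hx
    have : ⌊x⌋ ≤ d := Int.lt_add_one_iff.mp (Int.floor_lt.mpr (by exact_mod_cast hlt))
    rw [Int.ceil_neg]
    omega

end FloorCeil

theorem interZ_le_interZ_of_le_of_eq {s : ℕ} {N : Matrix (Fin s) (Fin s) ℤ} {A B : Fin s → ℤ}
    {i : Fin s} (hoff : ∀ j, j ≠ i → 0 ≤ N j i) (hle : ∀ j, A j ≤ B j) (heq : A i = B i) :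
    interZ N A i ≤ interZ N B i := by
  refine Finset.sum_le_sum fun j _ => ?_
  by_cases hji : j = i
  · rw [hji, heq]
  · exact mul_le_mul_of_nonneg_right (hle j) (hoff j hji)

theorem interZ_neg {s : ℕ} (N : Matrix (Fin s) (Fin s) ℤ) (D : Fin s → ℤ) (i : Fin s) :
    interZ N (fun j => -D j) i = -interZ N D i := by
  simp only [interZ, neg_mul, Finset.sum_neg_distrib]

theorem nonneg_intersection_minimal_jumping_divisor_general
    (s r : ℕ)
    (N : Matrix (Fin s) (Fin s) ℤ)
    (hoff : ∀ i j : Fin s, i ≠ j → 0 ≤ N i j)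
    (F : Fin s → ℤ) (hF1 : ∀ i, 1 ≤ F i)
    (K : Fin s → ℚ)
    (lam' lam : ℚ) (hll : lam' < lam)
    (Dl' : Fin s → ℤ)
    (hconsec : ∀ c : ℚ, lam' ≤ c → c < lam →
      IsAntinefClosure r N (fun i => (⌊c * (F i : ℚ) - K i⌋ : ℚ)) Dl')
    (Gl : Fin s → ℤ)
    (hGl : ∀ i, Gl i = if lam * (F i : ℚ) = K i + 1 + (Dl' i : ℚ) then 1 else 0)
    (hGlexc : ∀ i : Fin s, r ≤ (i : ℕ) → Gl i = 0) :
    ∀ i : Fin s, Gl i = 1 →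
      0 ≤ interZ N (fun j => ⌈K j - lam * (F j : ℚ)⌉ + Gl j) i := by
  intro i hGi
  have hi : (i : ℕ) < r := by
    by_contra! h
    have := hGlexc i h
    omega
  have hceil (j : Fin s) : ⌈lam * (F j : ℚ) - K j⌉ ≤ Dl' j + 1 :=
    ceil_mul_sub_le_add_one_of_floor_le hll (by exact_mod_cast hF1 j) fun c h₁ h₂ =>
      Int.cast_le.mp ((hconsec c h₁ h₂).2.1 j)
  have hcond (j : Fin s) :
      lam * (F j : ℚ) = K j + 1 + (Dl' j : ℚ) ↔ lam * (F j : ℚ) - K j = (Dl' j : ℚ) + 1 := by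
    constructor <;> intro h <;> linarith
  have hA (j : Fin s) : ⌈K j - lam * (F j : ℚ)⌉ + Gl j =
      ⌈-(lam * (F j : ℚ) - K j)⌉ + if lam * (F j : ℚ) - K j = (Dl' j : ℚ) + 1 then 1 else 0 := by
    rw [hGl, neg_sub]
    simp only [hcond]
  have hxi : lam * (F i : ℚ) - K i = (Dl' i : ℚ) + 1 :=
    (hcond i).mp (by simpa [hGi] using hGl i)
  have heq : ⌈K i - lam * (F i : ℚ)⌉ + Gl i = -Dl' i := by
    rw [hA i, if_pos hxi]
    exact ceil_neg_add_one_of_eq_add_one hxi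
  calc 0 ≤ -interZ N Dl' i := neg_nonneg.mpr ((hconsec lam' le_rfl hll).1 i hi)
    _ = interZ N (fun j => -Dl' j) i := (interZ_neg N Dl' i).symm
    _ ≤ _ := interZ_le_interZ_of_le_of_eq (fun j hj => hoff j i hj)
        (fun j => (hA j).symm ▸ neg_le_ceil_neg_add_ite (hceil j)) heq.symm

/-- **Proposition `Num_condition`.** Assume the minimal jumping divisor
`G_λ` has exceptional support.  Then `(⌈K − λF⌉ + G_λ)·E_i ≥ 0` for every `i` in the
support of `G_λ`. -/
theorem nonneg_intersection_minimal_jumping_divisor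
    (s r : ℕ) (hr : 1 ≤ r) (hrs : r ≤ s)
    (N : Matrix (Fin s) (Fin s) ℤ)
    (hsym : ∀ i j, N i j = N j i)
    (hoff : ∀ i j : Fin s, i ≠ j → 0 ≤ N i j)
    (hneg : ∀ x : Fin s → ℚ, (∀ i : Fin s, r ≤ (i : ℕ) → x i = 0) → x ≠ 0 →
      (∑ i, ∑ j, x i * x j * (N i j : ℚ)) < 0)
    (F : Fin s → ℤ) (hF1 : ∀ i, 1 ≤ F i) (hFanti : Antinef r N F)
    (K : Fin s → ℚ) (hKaff : ∀ i : Fin s, r ≤ (i : ℕ) → K i = 0)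
    (hKexc : ∀ i : Fin s, (i : ℕ) < r →
      (∑ j, K j * (N j i : ℚ)) + (N i i : ℚ) = -2)
    (lam' lam : ℚ) (hl0 : 0 ≤ lam') (hll : lam' < lam)
    (Dl' : Fin s → ℤ)
    (hconsec : ∀ c : ℚ, lam' ≤ c → c < lam →
      IsAntinefClosure r N (fun i => (⌊c * (F i : ℚ) - K i⌋ : ℚ)) Dl')
    (Dl : Fin s → ℤ)
    (hDl : IsAntinefClosure r N (fun i => (⌊lam * (F i : ℚ) - K i⌋ : ℚ)) Dl)
    (hjump : Dl ≠ Dl')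
    (Gl : Fin s → ℤ)
    (hGl : ∀ i, Gl i = if lam * (F i : ℚ) = K i + 1 + (Dl' i : ℚ) then 1 else 0)
    (hGlexc : ∀ i : Fin s, r ≤ (i : ℕ) → Gl i = 0) :
    ∀ i : Fin s, Gl i = 1 →
      0 ≤ interZ N (fun j => ⌈K j - lam * (F j : ℚ)⌉ + Gl j) i :=
  nonneg_intersection_minimal_jumping_divisor_general s r N hoff F hF1 K lam' lam hll Dl' hconsec Gl
    hGl hGlexc
end

section
/- Let 0 ≤ λ' < λ be consecutive jumping values and assume that G_λ is supported on exceptional indices. If i ∈ supp G_λ is an end of a connected component of G_λ, that is a_{G_λ}(i) ≤ 1, then i is a rupture index or a dicritical index (i.e. a(i) ≥ 3 or ρ_i > 0). -/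
open scoped BigOperators

/-
An end `i` of `G_λ` is exceptional, so if it is not dicritical then `F · E_i = 0`. Since `λ'`
and `λ` are consecutive, every slack `δ_j := k_j + 1 + e_j^{λ'} - λ e_j` is nonnegative (a negative
one would make `D_c` jump at some `c < λ`), and `G_λ` is exactly where it vanishes. Intersecting
with `E_i` and using adjunction `K · E_i = -2 - E_i²` gives `∑_{j adjacent to i} δ_j ≤ a(i) - 2`.
Hence `a(i) ≥ 2`, and if `i` is not a rupture index then `a(i) = 2` and all neighbours of `i`
lie in `G_λ`, so `i` is not an end.
-/

theorem le_of_floor_le_of_forall_mem_Ico {a b f k : ℚ} {d : ℤ} (hab : a < b) (hf : 0 < f)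
    (h : ∀ c, a ≤ c → c < b → ⌊c * f - k⌋ ≤ d) : b * f ≤ k + 1 + d := by
  by_contra! hlt
  set c := (k + 1 + d) / f
  have hcf : c * f - k = ((d + 1 : ℤ) : ℚ) := by
    rw [div_mul_cancel₀ _ hf.ne']
    push_cast
    ring
  have hac : a ≤ c := by
    have ha := Int.lt_floor_add_one (a * f - k)
    have : (⌊a * f - k⌋ : ℚ) ≤ d := by exact_mod_cast h a le_rfl hab
    rw [le_div_iff₀ hf]
    linarith
  have hcb : c < b := by
    rw [div_lt_iff₀ hf]
    linarith
  have := h c hac hcb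
  rw [hcf, Int.floor_intCast] at this
  omega

section Intersection

variable {s : ℕ} (N : Matrix (Fin s) (Fin s) ℤ)

def neighbors (i : Fin s) : Finset (Fin s) :=
  Finset.univ.filter (fun j => j ≠ i ∧ N j i = 1)

theorem intCast_interZ (D : Fin s → ℤ) (i : Fin s) :
    ((interZ N D i : ℤ) : ℚ) = ∑ j, (D j : ℚ) * (N j i : ℚ) := by
  simp [interZ]

variable {N}

theorem sum_mul_eq_add_sum_neighbors {i : Fin s}
    (hoff01 : ∀ j, j ≠ i → N j i = 0 ∨ N j i = 1) (x : Fin s → ℚ) :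
    ∑ j, x j * (N j i : ℚ) = x i * (N i i : ℚ) + ∑ j ∈ neighbors N i, x j := by
  rw [← Finset.add_sum_erase _ _ (Finset.mem_univ i)]
  congr 1
  rw [neighbors, Finset.sum_filter, ← Finset.add_sum_erase _ _ (Finset.mem_univ i),
    if_neg (by simp), zero_add]
  refine Finset.sum_congr rfl fun j hj => ?_
  have hji := Finset.ne_of_mem_erase hj
  rcases hoff01 j hji with h | h <;> simp [h, hji]

theorem sum_neighbors_slack_eq {i : Fin s} (hoff01 : ∀ j, j ≠ i → N j i = 0 ∨ N j i = 1)
    {D F : Fin s → ℤ} {K : Fin s → ℚ} {lam : ℚ}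
    (hK : (∑ j, K j * (N j i : ℚ)) + (N i i : ℚ) = -2)
    (hi : lam * (F i : ℚ) = K i + 1 + (D i : ℚ)) :
    ∑ j ∈ neighbors N i, (K j + 1 + (D j : ℚ) - lam * (F j : ℚ)) =
      interZ N D i - lam * interZ N F i + (neighbors N i).card - 2 := by
  have hcol := sum_mul_eq_add_sum_neighbors hoff01 (fun _ => 1)
  have hslack := sum_mul_eq_add_sum_neighbors hoff01
    (fun j => K j + 1 + (D j : ℚ) - lam * (F j : ℚ))
  simp only [one_mul, Finset.sum_const, nsmul_eq_mul, mul_one] at hcol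
  simp only [hi, sub_self, zero_mul, zero_add] at hslack
  rw [← hslack, intCast_interZ, intCast_interZ, Finset.mul_sum]
  simp only [add_mul, sub_mul, one_mul, Finset.sum_add_distrib, Finset.sum_sub_distrib]
  simp only [mul_assoc]
  linarith

end Intersection

theorem card_eq_two_of_sum_le_card_sub_two {ι : Type*} {A : Finset ι} {δ : ι → ℚ}
    (hδ : ∀ j ∈ A, 0 ≤ δ j) (hsum : ∑ j ∈ A, δ j ≤ A.card - 2) (hA : A.card ≤ 2) :
    A.card = 2 ∧ ∀ j ∈ A, δ j = 0 := by
  have hnonneg := Finset.sum_nonneg hδ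
  have hcard : A.card = 2 := by
    have : (2 : ℚ) ≤ A.card := by linarith
    exact le_antisymm hA (by exact_mod_cast this)
  refine ⟨hcard, (Finset.sum_eq_zero_iff_of_nonneg hδ).1 ?_⟩
  rw [hcard] at hsum
  push_cast at hsum
  linarith

theorem ends_of_minimal_jumping_divisor_general
    (s r : ℕ)
    (N : Matrix (Fin s) (Fin s) ℤ)
    (hoff01 : ∀ i j : Fin s, i ≠ j → N i j = 0 ∨ N i j = 1)
    (F : Fin s → ℤ) (hF1 : ∀ i, 1 ≤ F i) (hFanti : Antinef r N F)
    (K : Fin s → ℚ)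
    (hKexc : ∀ i : Fin s, (i : ℕ) < r →
      (∑ j, K j * (N j i : ℚ)) + (N i i : ℚ) = -2)
    (lam' lam : ℚ) (hll : lam' < lam)
    (Dl' : Fin s → ℤ)
    (hconsec : ∀ c : ℚ, lam' ≤ c → c < lam →
      IsAntinefClosure r N (fun i => (⌊c * (F i : ℚ) - K i⌋ : ℚ)) Dl')
    (Gl : Fin s → ℤ)
    (hGl : ∀ i, Gl i = if lam * (F i : ℚ) = K i + 1 + (Dl' i : ℚ) then 1 else 0)
    (hGlexc : ∀ i : Fin s, r ≤ (i : ℕ) → Gl i = 0) :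
    ∀ i : Fin s, Gl i = 1 →
      (Finset.univ.filter (fun j => j ≠ i ∧ N j i = 1 ∧ Gl j = 1)).card ≤ 1 →
      3 ≤ (Finset.univ.filter (fun j => j ≠ i ∧ N j i = 1)).card ∨
        0 < -interZ N F i := by
  intro i hGi hends
  have hexc : (i : ℕ) < r := by
    by_contra! h
    simp [hGlexc i h] at hGi
  have hmem : ∀ j, Gl j = 1 ↔ lam * (F j : ℚ) = K j + 1 + (Dl' j : ℚ) := fun j => by
    rw [hGl j]; split_ifs <;> simp_all
  have hslack : ∀ j, lam * (F j : ℚ) ≤ K j + 1 + (Dl' j : ℚ) := fun j =>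
    le_of_floor_le_of_forall_mem_Ico hll (by exact_mod_cast hF1 j) fun c hc hc' => by
      have h : ((⌊c * (F j : ℚ) - K j⌋ : ℤ) : ℚ) ≤ Dl' j := (hconsec c hc hc').2.1 j
      exact_mod_cast h
  rcases (hFanti i hexc).lt_or_eq with hρ | hρ
  · exact Or.inr (by omega)
  refine Or.inl (not_lt.1 fun hrupt => ?_)
  have hsum := sum_neighbors_slack_eq (hoff01 · i) (D := Dl') (F := F) (lam := lam)
    (hKexc i hexc) ((hmem i).1 hGi)
  have hDl' : (interZ N Dl' i : ℚ) ≤ 0 := by exact_mod_cast (hconsec lam' le_rfl hll).1 i hexc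
  rw [hρ] at hsum
  obtain ⟨hcard, hzero⟩ := card_eq_two_of_sum_le_card_sub_two (A := neighbors N i)
    (fun j _ => sub_nonneg.2 (hslack j)) (by push_cast at hsum; linarith) (Nat.le_of_lt_succ hrupt)
  have hsub : neighbors N i ⊆ Finset.univ.filter (fun j => j ≠ i ∧ N j i = 1 ∧ Gl j = 1) :=
    fun j hj => by
      obtain ⟨hji, hN⟩ := (Finset.mem_filter.1 hj).2
      simpa [hji, hN, hmem] using (sub_eq_zero.1 (hzero j hj)).symm
  have := Finset.card_le_card hsub
  omega

/-- **Theorem `geo_dual_graph`.** Assume the minimal jumping divisor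
`G_λ` has exceptional support.  Every end of a connected component of `G_λ`
(an index `i ∈ supp G_λ` with `a_{G_λ}(i) ≤ 1`) is a rupture index (`a(i) ≥ 3`)
or a dicritical index (`ρ_i > 0`). -/
theorem ends_of_minimal_jumping_divisor
    (s r : ℕ) (hr : 1 ≤ r) (hrs : r ≤ s)
    (N : Matrix (Fin s) (Fin s) ℤ)
    (hsym : ∀ i j, N i j = N j i)
    (hoff : ∀ i j : Fin s, i ≠ j → 0 ≤ N i j)
    (hneg : ∀ x : Fin s → ℚ, (∀ i : Fin s, r ≤ (i : ℕ) → x i = 0) → x ≠ 0 →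
      (∑ i, ∑ j, x i * x j * (N i j : ℚ)) < 0)
    (hoff01 : ∀ i j : Fin s, i ≠ j → N i j = 0 ∨ N i j = 1)
    (F : Fin s → ℤ) (hF1 : ∀ i, 1 ≤ F i) (hFanti : Antinef r N F)
    (K : Fin s → ℚ) (hKaff : ∀ i : Fin s, r ≤ (i : ℕ) → K i = 0)
    (hKexc : ∀ i : Fin s, (i : ℕ) < r →
      (∑ j, K j * (N j i : ℚ)) + (N i i : ℚ) = -2)
    (lam' lam : ℚ) (hl0 : 0 ≤ lam') (hll : lam' < lam)
    (Dl' : Fin s → ℤ)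
    (hconsec : ∀ c : ℚ, lam' ≤ c → c < lam →
      IsAntinefClosure r N (fun i => (⌊c * (F i : ℚ) - K i⌋ : ℚ)) Dl')
    (Dl : Fin s → ℤ)
    (hDl : IsAntinefClosure r N (fun i => (⌊lam * (F i : ℚ) - K i⌋ : ℚ)) Dl)
    (hjump : Dl ≠ Dl')
    (Gl : Fin s → ℤ)
    (hGl : ∀ i, Gl i = if lam * (F i : ℚ) = K i + 1 + (Dl' i : ℚ) then 1 else 0)
    (hGlexc : ∀ i : Fin s, r ≤ (i : ℕ) → Gl i = 0) :
    ∀ i : Fin s, Gl i = 1 →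
      (Finset.univ.filter (fun j => j ≠ i ∧ N j i = 1 ∧ Gl j = 1)).card ≤ 1 →
      3 ≤ (Finset.univ.filter (fun j => j ≠ i ∧ N j i = 1)).card ∨
        0 < -interZ N F i :=
  ends_of_minimal_jumping_divisor_general s r N hoff01 F hF1 hFanti K hKexc lam' lam hll Dl' hconsec
    Gl hGl hGlexc
end

section
/- Assume r = s, i.e. all components are exceptional (the case of an 𝔪-primary ideal). Let 0 ≤ λ' < λ be consecutive jumping values. If i ∈ supp G_λ is neither a rupture index nor dicritical (i.e. a(i) ≤ 2 and ρ_i = 0), then (⌈K − λF⌉ + G_λ)·E_i = 0. -/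
open scoped BigOperators

/-!
Write `A = ⌈K - λF⌉ + G_λ` and `x_j = λ e_j - k_j`. Since `D_{λ'}` dominates `⌊cF - K⌋` for all
`c ∈ [λ', λ)`, every integer below `x_j` is at most `e_j^{λ'}`; hence `-D_{λ'} ≤ A ≤ 1 - x`
entrywise, with both equalities at `i ∈ supp G_λ`. As the off-diagonal intersection numbers are
nonnegative, this sandwiches `A · E_i` between `-D_{λ'} · E_i ≥ 0` (antinefness) and
`(K - λF + Σ_j E_j) · E_i = (-2 - E_i²) + λ ρ_i + (E_i² + a(i)) = a(i) - 2 ≤ 0`.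
-/

open Finset

section Floor

variable {α : Type*} [Field α] [LinearOrder α] [IsStrictOrderedRing α] [FloorRing α]

theorem int_le_of_lt_of_forall_floor_le {lam' lam f k : α} {d m : ℤ} (hll : lam' < lam)
    (hf : 0 < f) (h : ∀ c, lam' ≤ c → c < lam → ⌊c * f - k⌋ ≤ d) (hm : (m : α) < lam * f - k) :
    m ≤ d := by
  set c := max lam' ((m + k) / f)
  have hc : c < lam := max_lt hll (by rw [div_lt_iff₀ hf]; linarith)
  have hmc : (m : α) ≤ c * f - k := by
    have := (div_le_iff₀ hf).1 (le_max_right lam' ((m + k) / f))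
    linarith
  exact (Int.le_floor.2 hmc).trans (h c (le_max_left _ _) hc)

theorem floor_le_of_forall_lt_imp_le {x : α} {d : ℤ} (h : ∀ m : ℤ, (m : α) < x → m ≤ d)
    (hx : x ≠ d + 1) : ⌊x⌋ ≤ d := by
  rcases (Int.floor_le x).lt_or_eq with hlt | heq
  · exact h _ hlt
  · have hle := h (⌊x⌋ - 1) (by push_cast; linarith)
    have hne : ⌊x⌋ ≠ d + 1 := fun e => hx (by rw [← heq, e]; push_cast; ring)
    omega

end Floor

section JumpingDivisor

/-- The coefficient of the minimal jumping divisor `G_λ` at a component with `e_j = f`,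
`k_j = k` and `e_j^{λ'} = d`. -/
def minJumpingCoeff (lam f k : ℚ) (d : ℤ) : ℤ :=
  if lam * f = k + 1 + d then 1 else 0

variable {lam f k : ℚ} {d : ℤ}

theorem ceil_sub_mul_of_mem_support (he : lam * f = k + 1 + d) :
    ⌈k - lam * f⌉ = -(d + 1) := by
  rw [Int.ceil_eq_iff]
  push_cast
  constructor <;> linarith

theorem neg_le_ceil_sub_mul_add_minJumpingCoeff (h : ∀ m : ℤ, (m : ℚ) < lam * f - k → m ≤ d) :
    -d ≤ ⌈k - lam * f⌉ + minJumpingCoeff lam f k d := by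
  unfold minJumpingCoeff
  split_ifs with he
  · rw [ceil_sub_mul_of_mem_support he]
    omega
  · have hfloor : ⌊lam * f - k⌋ ≤ d :=
      floor_le_of_forall_lt_imp_le h fun hx => he (by linarith)
    rw [← neg_sub, Int.ceil_neg]
    omega

theorem ceil_sub_mul_add_minJumpingCoeff_le :
    ((⌈k - lam * f⌉ + minJumpingCoeff lam f k d : ℤ) : ℚ) ≤ k - lam * f + 1 := by
  unfold minJumpingCoeff
  split_ifs with he
  · rw [ceil_sub_mul_of_mem_support he]
    push_cast
    linarith
  · have := Int.ceil_lt_add_one (k - lam * f)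
    push_cast
    linarith

end JumpingDivisor

section Intersection

theorem sum_mul_le_sum_mul_of_le_of_eq {ι R : Type*} [Fintype ι] [Semiring R] [PartialOrder R]
    [IsOrderedRing R] {N : ι → ι → R} {D D' : ι → R} {i : ι} (hN : ∀ j, j ≠ i → 0 ≤ N j i)
    (hle : ∀ j, j ≠ i → D j ≤ D' j) (heq : D i = D' i) :
    ∑ j, D j * N j i ≤ ∑ j, D' j * N j i := by
  refine sum_le_sum fun j _ => ?_
  by_cases hj : j = i
  · rw [hj, heq]
  · exact mul_le_mul_of_nonneg_right (hle j hj) (hN j hj)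

variable {s : ℕ} {N : Matrix (Fin s) (Fin s) ℤ}

theorem sum_col_eq_diag_add_card (hoff01 : ∀ i j : Fin s, i ≠ j → N i j = 0 ∨ N i j = 1)
    (i : Fin s) : ∑ j, N j i = N i i + #{j | j ≠ i ∧ N j i = 1} := by
  rw [← add_sum_erase _ _ (mem_univ i), card_filter, Nat.cast_sum,
    ← sum_erase univ (a := i) (by simp)]
  congr 1
  refine sum_congr rfl fun j hj => ?_
  have hji := ne_of_mem_erase hj
  rcases hoff01 j i hji with h | h <;> simp [h, hji]

theorem interZ_nonneg_of_neg_le {D A : Fin s → ℤ} {i : Fin s}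
    (hN : ∀ j, j ≠ i → 0 ≤ N j i) (hD : interZ N D i ≤ 0)
    (hle : ∀ j, j ≠ i → -D j ≤ A j) (heq : A i = -D i) : 0 ≤ interZ N A i :=
  calc 0 ≤ ∑ j, -D j * N j i := by simpa [interZ] using hD
    _ ≤ interZ N A i := sum_mul_le_sum_mul_of_le_of_eq hN hle heq.symm

theorem interZ_nonpos_of_le_sub_add_one {F A : Fin s → ℤ} {K : Fin s → ℚ} {lam : ℚ} {i : Fin s}
    (hN : ∀ j, j ≠ i → 0 ≤ N j i) (hcol : ∑ j, N j i ≤ N i i + 2)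
    (hK : (∑ j, K j * (N j i : ℚ)) + (N i i : ℚ) = -2) (hF : interZ N F i = 0)
    (hle : ∀ j, j ≠ i → (A j : ℚ) ≤ K j - lam * F j + 1)
    (heq : (A i : ℚ) = K i - lam * F i + 1) : interZ N A i ≤ 0 := by
  have hFq : ∑ j, (F j : ℚ) * N j i = 0 := by exact_mod_cast hF
  have hcolq : ∑ j, (N j i : ℚ) ≤ N i i + 2 := by exact_mod_cast hcol
  have hsplit : ∑ j, (K j - lam * F j + 1) * (N j i : ℚ) =
      (∑ j, K j * (N j i : ℚ)) - lam * ∑ j, (F j : ℚ) * N j i + ∑ j, (N j i : ℚ) := by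
    simp only [mul_sum, ← sum_sub_distrib, ← sum_add_distrib]
    exact sum_congr rfl fun j _ => by ring
  have hA : ∑ j, (A j : ℚ) * N j i ≤ ∑ j, (K j - lam * F j + 1) * (N j i : ℚ) :=
    sum_mul_le_sum_mul_of_le_of_eq (N := fun j i => (N j i : ℚ)) (D := fun j => (A j : ℚ))
      (fun j hj => Int.cast_nonneg (hN j hj)) hle heq
  have hAq : (interZ N A i : ℚ) ≤ 0 := by
    push_cast [interZ]
    rw [hFq, mul_zero] at hsplit
    linarith
  exact_mod_cast hAq

end Intersection

theorem zero_intersection_at_non_rupture_non_dicritical_general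
    (s r : ℕ)
    (N : Matrix (Fin s) (Fin s) ℤ)
    (hoff01 : ∀ i j : Fin s, i ≠ j → N i j = 0 ∨ N i j = 1)
    (hreqs : r = s)
    (F : Fin s → ℤ) (hF1 : ∀ i, 1 ≤ F i)
    (K : Fin s → ℚ)
    (hKexc : ∀ i : Fin s, (i : ℕ) < r →
      (∑ j, K j * (N j i : ℚ)) + (N i i : ℚ) = -2)
    (lam' lam : ℚ) (hll : lam' < lam)
    (Dl' : Fin s → ℤ)
    (hconsec : ∀ c : ℚ, lam' ≤ c → c < lam →
      IsAntinefClosure r N (fun i => (⌊c * (F i : ℚ) - K i⌋ : ℚ)) Dl')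
    (Gl : Fin s → ℤ)
    (hGl : ∀ i, Gl i = if lam * (F i : ℚ) = K i + 1 + (Dl' i : ℚ) then 1 else 0)
    :
    ∀ i : Fin s, Gl i = 1 →
      (Finset.univ.filter (fun j => j ≠ i ∧ N j i = 1)).card ≤ 2 →
      interZ N F i = 0 →
      interZ N (fun j => ⌈K j - lam * (F j : ℚ)⌉ + Gl j) i = 0 := by
  intro i hGi hval hFi
  have hi : (i : ℕ) < r := hreqs ▸ i.isLt
  have hN : ∀ j, j ≠ i → 0 ≤ N j i := fun j hj => by
    rcases hoff01 j i hj with h | h <;> simp [h]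
  have hcol : ∑ j, N j i ≤ N i i + 2 := by
    rw [sum_col_eq_diag_add_card hoff01 i]
    omega
  have hG : ∀ j, Gl j = minJumpingCoeff lam (F j) (K j) (Dl' j) := hGl
  have hsupp : lam * F i = K i + 1 + Dl' i := by
    by_contra h
    simp [hGl, h] at hGi
  have hAi : ⌈K i - lam * F i⌉ + Gl i = -Dl' i := by
    rw [ceil_sub_mul_of_mem_support hsupp, hGi]
    ring
  have hbelow : ∀ j (m : ℤ), (m : ℚ) < lam * F j - K j → m ≤ Dl' j := fun j _ =>
    int_le_of_lt_of_forall_floor_le hll (by exact_mod_cast hF1 j)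
      fun c h₁ h₂ => Int.cast_le.1 ((hconsec c h₁ h₂).2.1 j)
  refine le_antisymm ?_ ?_
  · refine interZ_nonpos_of_le_sub_add_one hN hcol (hKexc i hi) hFi
      (fun j _ => hG j ▸ ceil_sub_mul_add_minJumpingCoeff_le) ?_
    rw [hAi]
    push_cast
    linarith
  · exact interZ_nonneg_of_neg_le hN ((hconsec lam' le_rfl hll).1 i hi)
      (fun j _ => hG j ▸ neg_le_ceil_sub_mul_add_minJumpingCoeff (hbelow j)) hAi

/-- **Proposition `Num_condition2`.** Assume `r = s` (the
`𝔪`-primary case).  If `i ∈ supp G_λ` is neither a rupture index nor dicritical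
(`a(i) ≤ 2` and `ρ_i = 0`), then `(⌈K − λF⌉ + G_λ)·E_i = 0`. -/
theorem zero_intersection_at_non_rupture_non_dicritical
    (s r : ℕ) (hr : 1 ≤ r) (hrs : r ≤ s)
    (N : Matrix (Fin s) (Fin s) ℤ)
    (hsym : ∀ i j, N i j = N j i)
    (hoff : ∀ i j : Fin s, i ≠ j → 0 ≤ N i j)
    (hneg : ∀ x : Fin s → ℚ, (∀ i : Fin s, r ≤ (i : ℕ) → x i = 0) → x ≠ 0 →
      (∑ i, ∑ j, x i * x j * (N i j : ℚ)) < 0)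
    (hoff01 : ∀ i j : Fin s, i ≠ j → N i j = 0 ∨ N i j = 1)
    (hreqs : r = s)
    (F : Fin s → ℤ) (hF1 : ∀ i, 1 ≤ F i) (hFanti : Antinef r N F)
    (K : Fin s → ℚ) (hKaff : ∀ i : Fin s, r ≤ (i : ℕ) → K i = 0)
    (hKexc : ∀ i : Fin s, (i : ℕ) < r →
      (∑ j, K j * (N j i : ℚ)) + (N i i : ℚ) = -2)
    (lam' lam : ℚ) (hl0 : 0 ≤ lam') (hll : lam' < lam)
    (Dl' : Fin s → ℤ)
    (hconsec : ∀ c : ℚ, lam' ≤ c → c < lam →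
      IsAntinefClosure r N (fun i => (⌊c * (F i : ℚ) - K i⌋ : ℚ)) Dl')
    (Dl : Fin s → ℤ)
    (hDl : IsAntinefClosure r N (fun i => (⌊lam * (F i : ℚ) - K i⌋ : ℚ)) Dl)
    (hjump : Dl ≠ Dl')
    (Gl : Fin s → ℤ)
    (hGl : ∀ i, Gl i = if lam * (F i : ℚ) = K i + 1 + (Dl' i : ℚ) then 1 else 0)
    :
    ∀ i : Fin s, Gl i = 1 →
      (Finset.univ.filter (fun j => j ≠ i ∧ N j i = 1)).card ≤ 2 →
      interZ N F i = 0 →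
      interZ N (fun j => ⌈K j - lam * (F j : ℚ)⌉ + Gl j) i = 0 :=
  zero_intersection_at_non_rupture_non_dicritical_general s r N hoff01 hreqs F hF1 K hKexc lam' lam
    hll Dl' hconsec Gl hGl
end

section
/- Let 0 ≤ λ' < λ be consecutive jumping values, let G be a candidate divisor for λ that contributes to λ, and let D be the antinef closure of ⌊λF − K⌋ − G. Then G_D ≤ G, i.e. S_D ⊆ supp G. -/
/-!
If some `i ∈ S_D` had `G i = 0`, then `⌊λ e_i − k_i⌋ ≤ d_i = λ_D e_i − k_i − 1` would force
`λ < λ_D`, and then `⌊λ e_j − k_j⌋ ≤ d_j` for every `j`. So `D` is an antinef divisor above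
`⌊λF − K⌋`, whence `D_λ ≤ D`; as `G ≥ 0` also `D ≤ D_λ`, contradicting that `G` contributes.
-/

open scoped BigOperators

section FloorBounds

variable {α : Type*} [Field α] [LinearOrder α] [IsStrictOrderedRing α] [FloorRing α]
  {lam μ f k : α} {d : ℤ}

theorem floor_mul_sub_le_of_lt_of_le_div (hf : 0 < f) (hlt : lam < μ)
    (hμ : μ ≤ (k + 1 + d) / f) : ⌊lam * f - k⌋ ≤ d := by
  rw [le_div_iff₀ hf] at hμ
  rw [Int.floor_le_iff]
  linarith [mul_lt_mul_of_pos_right hlt hf]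

theorem lt_of_floor_mul_sub_le_of_mul_eq (hf : 0 < f) (hfloor : ⌊lam * f - k⌋ ≤ d)
    (hμ : μ * f = k + 1 + d) : lam < μ := by
  rw [Int.floor_le_iff] at hfloor
  exact lt_of_mul_lt_mul_right (by linarith) hf.le

end FloorBounds

theorem IsAntinefClosure.le_of_le {s r : ℕ} {N : Matrix (Fin s) (Fin s) ℤ}
    {D D' : Fin s → ℚ} {Dt Dt' : Fin s → ℤ} (h : IsAntinefClosure r N D Dt)
    (h' : IsAntinefClosure r N D' Dt') (hle : ∀ i, D i ≤ D' i) : ∀ i, Dt i ≤ Dt' i :=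
  h.2.2 Dt' h'.1 fun i => (hle i).trans (h'.2.1 i)

theorem support_of_closure_le_contributing_general
    (s r : ℕ)
    (N : Matrix (Fin s) (Fin s) ℤ)
    (F : Fin s → ℤ) (hF1 : ∀ i, 1 ≤ F i)
    (K : Fin s → ℚ)
    (lam : ℚ)
    (Dl : Fin s → ℤ)
    (hDl : IsAntinefClosure r N (fun i => (⌊lam * (F i : ℚ) - K i⌋ : ℚ)) Dl)
    (G : Fin s → ℤ) (hGred : ∀ i, G i = 0 ∨ G i = 1)
    (D : Fin s → ℤ)
    (hD : IsAntinefClosure r N (fun i => ((⌊lam * (F i : ℚ) - K i⌋ - G i : ℤ) : ℚ)) D)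
    (hDne : D ≠ Dl)
    (lamD : ℚ)
    (hlamD_le : ∀ i, lamD ≤ (K i + 1 + (D i : ℚ)) / (F i : ℚ)) :
    ∀ i, lamD * (F i : ℚ) = K i + 1 + (D i : ℚ) → G i = 1 := by
  intro i hi
  by_contra hGi
  have hG0 : G i = 0 := (hGred i).resolve_right hGi
  have hF : ∀ j, (0 : ℚ) < F j := fun j => by exact_mod_cast (hF1 j)
  have hfloor_i : ⌊lam * (F i : ℚ) - K i⌋ ≤ D i := by
    simpa [hG0] using hD.2.1 i
  have hlt : lam < lamD := lt_of_floor_mul_sub_le_of_mul_eq (hF i) hfloor_i hi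
  have hDl_le : ∀ j, Dl j ≤ D j := hDl.2.2 D hD.1 fun j =>
    Int.cast_le.mpr (floor_mul_sub_le_of_lt_of_le_div (hF j) hlt (hlamD_le j))
  have hD_le : ∀ j, D j ≤ Dl j := hD.le_of_le hDl fun j => by
    have hG : (0 : ℚ) ≤ G j := by rcases hGred j with h | h <;> simp [h]
    push_cast
    linarith
  exact hDne (funext fun j => (hD_le j).antisymm (hDl_le j))

/-- **Proposition `G_DleqG`.** Let `G` be a candidate divisor for the
jumping number `λ` that contributes to `λ`, and let `D` be the antinef closure of
`⌊λF − K⌋ − G`.  Then `G_D ≤ G`, i.e. `S_D ⊆ supp G`. -/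
theorem support_of_closure_le_contributing
    (s r : ℕ) (hr : 1 ≤ r) (hrs : r ≤ s)
    (N : Matrix (Fin s) (Fin s) ℤ)
    (hsym : ∀ i j, N i j = N j i)
    (hoff : ∀ i j : Fin s, i ≠ j → 0 ≤ N i j)
    (hneg : ∀ x : Fin s → ℚ, (∀ i : Fin s, r ≤ (i : ℕ) → x i = 0) → x ≠ 0 →
      (∑ i, ∑ j, x i * x j * (N i j : ℚ)) < 0)
    (F : Fin s → ℤ) (hF1 : ∀ i, 1 ≤ F i) (hFanti : Antinef r N F)
    (K : Fin s → ℚ) (hKaff : ∀ i : Fin s, r ≤ (i : ℕ) → K i = 0)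
    (hKexc : ∀ i : Fin s, (i : ℕ) < r →
      (∑ j, K j * (N j i : ℚ)) + (N i i : ℚ) = -2)
    (lam' lam : ℚ) (hl0 : 0 ≤ lam') (hll : lam' < lam)
    (Dl' : Fin s → ℤ)
    (hconsec : ∀ c : ℚ, lam' ≤ c → c < lam →
      IsAntinefClosure r N (fun i => (⌊c * (F i : ℚ) - K i⌋ : ℚ)) Dl')
    (Dl : Fin s → ℤ)
    (hDl : IsAntinefClosure r N (fun i => (⌊lam * (F i : ℚ) - K i⌋ : ℚ)) Dl)
    (hjump : Dl ≠ Dl')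
    (G : Fin s → ℤ) (hGred : ∀ i, G i = 0 ∨ G i = 1)
    (hGcand : ∀ i, G i = 1 → ∃ m : ℤ, 0 < m ∧ lam * (F i : ℚ) - K i = (m : ℚ))
    (D : Fin s → ℤ)
    (hD : IsAntinefClosure r N (fun i => ((⌊lam * (F i : ℚ) - K i⌋ - G i : ℤ) : ℚ)) D)
    (hDne : D ≠ Dl)
    (lamD : ℚ)
    (hlamD_le : ∀ i, lamD ≤ (K i + 1 + (D i : ℚ)) / (F i : ℚ))
    (hlamD_mem : ∃ i, lamD = (K i + 1 + (D i : ℚ)) / (F i : ℚ)) :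
    ∀ i, lamD * (F i : ℚ) = K i + 1 + (D i : ℚ) → G i = 1 :=
  support_of_closure_le_contributing_general s r N F hF1 K lam Dl hDl G hGred D hD hDne lamD
    hlamD_le
end

section
/- Let D' be an integral antinef divisor and set λ := λ_{D'}. Let D be the antinef closure of ⌊λF − K⌋ − G_{D'}. Then D ≤ D', λ_D = λ_{D'}, S_D = S_{D'} and G_D = G_{D'}. -/
open scoped BigOperators

/-!
Everything happens entrywise. Since `λ e_i ≤ k_i + 1 + d'_i`, with equality exactly on
`S_{D'}`, the divisor `⌊λF − K⌋ − G_{D'}` lies below `D'`, so minimality of the closure gives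
`D ≤ D'`. Conversely `D ≥ ⌊λF − K⌋ − G_{D'}` forces `d_i = d'_i` on `S_{D'}` and
`λ e_i < ⌊λ e_i − k_i⌋ + 1 + k_i ≤ k_i + 1 + d_i` off it, which is all the rest.
-/

section FloorRing

variable {α : Type*} [CommRing α] [LinearOrder α] [IsStrictOrderedRing α] [FloorRing α]

theorem floor_sub_eq_add_one_of_eq {a k : α} {d : ℤ} (h : a = k + 1 + d) :
    ⌊a - k⌋ = d + 1 := by
  rw [h, show k + 1 + (d : α) - k = ((d + 1 : ℤ) : α) by push_cast; abel, Int.floor_intCast]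

theorem floor_sub_sub_ite_le_of_le {a k : α} {d : ℤ} (h : a ≤ k + 1 + d) :
    ⌊a - k⌋ - (if a = k + 1 + d then 1 else 0) ≤ d := by
  split_ifs with heq
  · rw [floor_sub_eq_add_one_of_eq heq]; omega
  · have : a - k < ((d + 1 : ℤ) : α) := by
      push_cast
      linarith [lt_of_le_of_ne h heq]
    have := Int.floor_lt.mpr this
    omega

theorem le_and_eq_iff_of_floor_sub_sub_ite_le {a k : α} {d e : ℤ} (had : a ≤ k + 1 + d)
    (hed : e ≤ d) (he : ⌊a - k⌋ - (if a = k + 1 + d then 1 else 0) ≤ e) :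
    a ≤ k + 1 + e ∧ (a = k + 1 + e ↔ a = k + 1 + d) := by
  by_cases heq : a = k + 1 + d
  · rw [if_pos heq, floor_sub_eq_add_one_of_eq heq] at he
    obtain rfl : e = d := by omega
    exact ⟨had, Iff.rfl⟩
  · rw [if_neg heq, sub_zero] at he
    have hlt : a < k + 1 + e := by
      have := Int.lt_floor_add_one (a - k)
      have : ((⌊a - k⌋ : ℤ) : α) ≤ e := by exact_mod_cast he
      linarith
    exact ⟨hlt.le, iff_of_false hlt.ne heq⟩

end FloorRing

theorem closure_of_associated_contributing_divisor_general
    (s r : ℕ)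
    (N : Matrix (Fin s) (Fin s) ℤ)
    (F : Fin s → ℤ) (hF1 : ∀ i, 1 ≤ F i)
    (K : Fin s → ℚ)
    (D' : Fin s → ℤ) (hD'anti : Antinef r N D')
    (lam : ℚ)
    (hlam_le : ∀ i, lam ≤ (K i + 1 + (D' i : ℚ)) / (F i : ℚ))
    (hlam_mem : ∃ i, lam = (K i + 1 + (D' i : ℚ)) / (F i : ℚ))
    (GD' : Fin s → ℤ)
    (hGD' : ∀ i, GD' i = if lam * (F i : ℚ) = K i + 1 + (D' i : ℚ) then 1 else 0)
    (D : Fin s → ℤ)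
    (hD : IsAntinefClosure r N
      (fun i => ((⌊lam * (F i : ℚ) - K i⌋ - GD' i : ℤ) : ℚ)) D) :
    D ≤ D' ∧
      (∀ i, lam ≤ (K i + 1 + (D i : ℚ)) / (F i : ℚ)) ∧
      (∃ i, lam = (K i + 1 + (D i : ℚ)) / (F i : ℚ)) ∧
      (∀ i, lam * (F i : ℚ) = K i + 1 + (D i : ℚ) ↔
        lam * (F i : ℚ) = K i + 1 + (D' i : ℚ)) ∧
      (fun i => if lam * (F i : ℚ) = K i + 1 + (D i : ℚ) then (1 : ℤ) else 0) = GD' := by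
  obtain ⟨-, hD_ge, hD_min⟩ := hD
  have hF_pos : ∀ i, (0 : ℚ) < F i := fun i => by exact_mod_cast hF1 i
  have hD'_le : ∀ i, lam * F i ≤ K i + 1 + D' i := fun i =>
    (le_div_iff₀ (hF_pos i)).mp (hlam_le i)
  have hD_le : D ≤ D' := hD_min D' hD'anti fun i => by
    dsimp only
    rw [hGD']
    exact_mod_cast floor_sub_sub_ite_le_of_le (hD'_le i)
  have hD_jump : ∀ i, lam * F i ≤ K i + 1 + D i ∧
      (lam * F i = K i + 1 + D i ↔ lam * F i = K i + 1 + D' i) := fun i =>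
    le_and_eq_iff_of_floor_sub_sub_ite_le (hD'_le i) (hD_le i) (by
      have := hD_ge i
      dsimp only at this
      rw [hGD'] at this
      exact_mod_cast this)
  refine ⟨hD_le, fun i => (le_div_iff₀ (hF_pos i)).mpr (hD_jump i).1, ?_,
    fun i => (hD_jump i).2, ?_⟩
  · obtain ⟨i, hi⟩ := hlam_mem
    exact ⟨i, (eq_div_iff (hF_pos i).ne').mpr
      ((hD_jump i).2.mpr ((eq_div_iff (hF_pos i).ne').mp hi))⟩
  · funext i
    rw [hGD', if_congr (hD_jump i).2 rfl rfl]

/-- **Proposition `Prop3`.** Let `λ = λ_{D'}` be the jumping number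
associated to an integral antinef divisor `D'`, and let `D` be the antinef closure
of `⌊λF − K⌋ − G_{D'}`.  Then `D ≤ D'`, `λ_D = λ_{D'}`, `S_D = S_{D'}` and
`G_D = G_{D'}`. -/
theorem closure_of_associated_contributing_divisor
    (s r : ℕ) (hr : 1 ≤ r) (hrs : r ≤ s)
    (N : Matrix (Fin s) (Fin s) ℤ)
    (hsym : ∀ i j, N i j = N j i)
    (hoff : ∀ i j : Fin s, i ≠ j → 0 ≤ N i j)
    (hneg : ∀ x : Fin s → ℚ, (∀ i : Fin s, r ≤ (i : ℕ) → x i = 0) → x ≠ 0 →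
      (∑ i, ∑ j, x i * x j * (N i j : ℚ)) < 0)
    (F : Fin s → ℤ) (hF1 : ∀ i, 1 ≤ F i) (hFanti : Antinef r N F)
    (K : Fin s → ℚ) (hKaff : ∀ i : Fin s, r ≤ (i : ℕ) → K i = 0)
    (hKexc : ∀ i : Fin s, (i : ℕ) < r →
      (∑ j, K j * (N j i : ℚ)) + (N i i : ℚ) = -2)
    (D' : Fin s → ℤ) (hD'anti : Antinef r N D')
    (lam : ℚ)
    (hlam_le : ∀ i, lam ≤ (K i + 1 + (D' i : ℚ)) / (F i : ℚ))
    (hlam_mem : ∃ i, lam = (K i + 1 + (D' i : ℚ)) / (F i : ℚ))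
    (GD' : Fin s → ℤ)
    (hGD' : ∀ i, GD' i = if lam * (F i : ℚ) = K i + 1 + (D' i : ℚ) then 1 else 0)
    (D : Fin s → ℤ)
    (hD : IsAntinefClosure r N
      (fun i => ((⌊lam * (F i : ℚ) - K i⌋ - GD' i : ℤ) : ℚ)) D) :
    D ≤ D' ∧
      (∀ i, lam ≤ (K i + 1 + (D i : ℚ)) / (F i : ℚ)) ∧
      (∃ i, lam = (K i + 1 + (D i : ℚ)) / (F i : ℚ)) ∧
      (∀ i, lam * (F i : ℚ) = K i + 1 + (D i : ℚ) ↔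
        lam * (F i : ℚ) = K i + 1 + (D' i : ℚ)) ∧
      (fun i => if lam * (F i : ℚ) = K i + 1 + (D i : ℚ) then (1 : ℤ) else 0) = GD' :=
  closure_of_associated_contributing_divisor_general s r N F hF1 K D' hD'anti lam hlam_le hlam_mem
    GD' hGD' D hD
end

section
/- Let 0 ≤ λ' < λ be consecutive jumping values, let G be a candidate divisor for λ that contributes to λ, and let D be the antinef closure of ⌊λF − K⌋ − G. Then: (a) the antinef closure of ⌊λF − K⌋ − G_D also equals D; (b) every candidate divisor G' for λ such that the antinef closure of ⌊λF − K⌋ − G' equals D satisfies G_D ≤ G'; and (c) for every reduced divisor G' with G' ≤ G_D and G' ≠ G_D, the antinef closure C' of ⌊λF − K⌋ − G' satisfies D < C' (i.e. D ≤ C' and D ≠ C'). In other words, G_D is the minimal contributing divisor associated to λ defining the same complete ideal as G. -/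
open scoped BigOperators

/-!
Write `A = ⌊λF − K⌋`. Since `G` is reduced and a candidate, `A − G ≤ D` forces
`λ·e_i − k_i ≤ d_i + 1` for all `i`; since `G` contributes, `A ≰ D` (otherwise `D` would be the
closure of `A`, i.e. `D_λ`), so equality holds for some `i`. Hence `λ_D = λ` and `G_D` is the
indicator of `{i | d_i < A_i}`. Every effective `G'` with `A − G' ≤ D` dominates this indicator,
while `A − G_D ≤ D`, so (a), (b) and (c) follow from monotonicity and minimality of closures.
-/

section AntinefClosure

variable {s r : ℕ} {N : Matrix (Fin s) (Fin s) ℤ} {X Y D D' : Fin s → ℤ}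

theorem IsAntinefClosure.le_closure (hD : IsAntinefClosure r N (fun i => (X i : ℚ)) D) :
    X ≤ D :=
  fun i => Int.cast_le.mp (hD.2.1 i)

theorem IsAntinefClosure.closure_le (hD : IsAntinefClosure r N (fun i => (X i : ℚ)) D)
    (hD' : Antinef r N D') (hXD' : X ≤ D') : D ≤ D' :=
  hD.2.2 D' hD' fun i => Int.cast_le.mpr (hXD' i)

theorem IsAntinefClosure.mono_s18 (hD : IsAntinefClosure r N (fun i => (X i : ℚ)) D)
    (hD' : IsAntinefClosure r N (fun i => (Y i : ℚ)) D') (hXY : X ≤ Y) : D ≤ D' :=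
  hD.closure_le hD'.1 (hXY.trans hD'.le_closure)

theorem IsAntinefClosure.of_le_of_le_s18 (hD : IsAntinefClosure r N (fun i => (X i : ℚ)) D)
    (hXY : X ≤ Y) (hYD : Y ≤ D) : IsAntinefClosure r N (fun i => (Y i : ℚ)) D :=
  ⟨hD.1, fun i => Int.cast_le.mpr (hYD i),
    fun _ hC hYC => hD.closure_le hC (hXY.trans fun i => Int.cast_le.mp (hYC i))⟩

theorem IsAntinefClosure.eq_of_sub_of_le {G : Fin s → ℤ}
    (hD : IsAntinefClosure r N (fun i => ((X - G) i : ℚ)) D)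
    (hD' : IsAntinefClosure r N (fun i => (X i : ℚ)) D') (hG : 0 ≤ G) (hXD : X ≤ D) :
    D = D' :=
  le_antisymm (hD.mono_s18 hD' (sub_le_self X hG)) (hD'.closure_le hD.1 hXD)

end AntinefClosure

theorem nonneg_of_forall_eq_zero_or_eq_one {ι : Type*} {G : ι → ℤ} (hG : ∀ i, G i = 0 ∨ G i = 1) :
    0 ≤ G := fun i => by
  rcases hG i with h | h <;> simp [h]

section ExceedIndicator

variable {ι : Type*} {A D G : ι → ℤ}

def exceedIndicator (A D : ι → ℤ) : ι → ℤ := fun i => if D i < A i then 1 else 0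

theorem exceedIndicator_le (hG : 0 ≤ G) (h : A - G ≤ D) : exceedIndicator A D ≤ G := by
  intro i
  have hi := h i
  have hGi := hG i
  simp only [exceedIndicator, Pi.sub_apply, Pi.zero_apply] at hi hGi ⊢
  split_ifs <;> omega

theorem sub_exceedIndicator_le (hA : A ≤ D + 1) : A - exceedIndicator A D ≤ D := by
  intro i
  have hi := hA i
  simp only [exceedIndicator, Pi.sub_apply, Pi.add_apply, Pi.one_apply] at hi ⊢
  split_ifs <;> omega

end ExceedIndicator

theorem le_add_one_of_floor_sub_le {x : ℚ} {g d : ℤ} (hg : g = 0 ∨ g = 1)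
    (hx : g = 1 → ∃ m : ℤ, x = m) (h : ⌊x⌋ - g ≤ d) : x ≤ d + 1 := by
  rcases hg with rfl | rfl
  · have : (⌊x⌋ : ℚ) ≤ d := by exact_mod_cast (by omega : ⌊x⌋ ≤ d)
    linarith [Int.lt_floor_add_one x]
  · obtain ⟨m, rfl⟩ := hx rfl
    rw [Int.floor_intCast] at h
    exact_mod_cast (by omega : m ≤ d + 1)

theorem lt_floor_iff_eq_add_one {x : ℚ} {d : ℤ} (h : x ≤ d + 1) : d < ⌊x⌋ ↔ x = d + 1 := by
  rw [Int.lt_iff_add_one_le, Int.le_floor]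
  push_cast
  exact ⟨fun h' => le_antisymm h h', fun h' => h'.ge⟩

theorem isLeast_range_div {ι : Type*} {f c : ι → ℚ} (hf : ∀ i, 0 < f i) {μ : ℚ}
    (hle : ∀ i, μ * f i ≤ c i) (hmem : ∃ i, c i ≤ μ * f i) :
    IsLeast (Set.range fun i => c i / f i) μ := by
  obtain ⟨i, hi⟩ := hmem
  refine ⟨⟨i, le_antisymm ((div_le_iff₀ (hf i)).2 hi) ((le_div_iff₀ (hf i)).2 (hle i))⟩, ?_⟩
  rintro _ ⟨j, rfl⟩
  exact (le_div_iff₀ (hf j)).2 (hle j)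

theorem minimal_contributing_divisor_general
    (s r : ℕ)
    (N : Matrix (Fin s) (Fin s) ℤ)
    (F : Fin s → ℤ) (hF1 : ∀ i, 1 ≤ F i)
    (K : Fin s → ℚ)
    (lam : ℚ)
    (Dl : Fin s → ℤ)
    (hDl : IsAntinefClosure r N (fun i => (⌊lam * (F i : ℚ) - K i⌋ : ℚ)) Dl)
    (G : Fin s → ℤ) (hGred : ∀ i, G i = 0 ∨ G i = 1)
    (hGcand : ∀ i, G i = 1 → ∃ m : ℤ, 0 < m ∧ lam * (F i : ℚ) - K i = (m : ℚ))
    (D : Fin s → ℤ)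
    (hD : IsAntinefClosure r N (fun i => ((⌊lam * (F i : ℚ) - K i⌋ - G i : ℤ) : ℚ)) D)
    (hDne : D ≠ Dl)
    (lamD : ℚ)
    (hlamD_le : ∀ i, lamD ≤ (K i + 1 + (D i : ℚ)) / (F i : ℚ))
    (hlamD_mem : ∃ i, lamD = (K i + 1 + (D i : ℚ)) / (F i : ℚ))
    (GD : Fin s → ℤ)
    (hGD : ∀ i, GD i = if lamD * (F i : ℚ) = K i + 1 + (D i : ℚ) then 1 else 0) :
    IsAntinefClosure r N (fun i => ((⌊lam * (F i : ℚ) - K i⌋ - GD i : ℤ) : ℚ)) D ∧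
      (∀ G' : Fin s → ℤ, (∀ i, G' i = 0 ∨ G' i = 1) →
        (∀ i, G' i = 1 → ∃ m : ℤ, 0 < m ∧ lam * (F i : ℚ) - K i = (m : ℚ)) →
        IsAntinefClosure r N (fun i => ((⌊lam * (F i : ℚ) - K i⌋ - G' i : ℤ) : ℚ)) D →
        GD ≤ G') ∧
      (∀ G' : Fin s → ℤ, (∀ i, G' i = 0 ∨ G' i = 1) → G' ≤ GD → G' ≠ GD →
        ∀ C' : Fin s → ℤ,
          IsAntinefClosure r N
            (fun i => ((⌊lam * (F i : ℚ) - K i⌋ - G' i : ℤ) : ℚ)) C' →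
          D ≤ C' ∧ D ≠ C') := by
  set A : Fin s → ℤ := fun i => ⌊lam * (F i : ℚ) - K i⌋
  have hG0 := nonneg_of_forall_eq_zero_or_eq_one hGred
  have hle : ∀ i, lam * F i - K i ≤ D i + 1 := fun i =>
    le_add_one_of_floor_sub_le (hGred i) (fun h => (hGcand i h).imp fun _ hm => hm.2)
      (hD.le_closure (X := A - G) i)
  have hexceed : ∃ i, K i + 1 + D i ≤ lam * F i := by
    obtain ⟨i, hi⟩ : ∃ i, D i < A i := by
      by_contra! h
      exact hDne (hD.eq_of_sub_of_le hDl hG0 h)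
    exact ⟨i, by linarith [(lt_floor_iff_eq_add_one (hle i)).1 hi]⟩
  have hlamD : lamD = lam :=
    IsLeast.unique ⟨hlamD_mem.imp fun _ h => h.symm, by rintro _ ⟨j, rfl⟩; exact hlamD_le j⟩
      (isLeast_range_div (fun i => Int.cast_pos.2 (hF1 i)) (fun i => by linarith [hle i]) hexceed)
  have hGD_eq : GD = exceedIndicator A D := funext fun i => by
    rw [hGD i, hlamD, exceedIndicator]
    exact if_congr (by rw [lt_floor_iff_eq_add_one (hle i)]; constructor <;> intro <;> linarith)
      rfl rfl
  have hA : ∀ i, A i ≤ D i + 1 := fun i => Int.floor_le_iff.2 (by push_cast; linarith [hle i])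
  have ha := hD.of_le_of_le_s18 (Y := A - GD)
    (sub_le_sub_left (hGD_eq ▸ exceedIndicator_le hG0 hD.le_closure) A)
    (hGD_eq ▸ sub_exceedIndicator_le hA)
  refine ⟨ha, fun G' hG' _ hG'D => ?_, fun G' hG' hG'le hne C' hC' => ?_⟩
  · exact hGD_eq ▸ exceedIndicator_le (nonneg_of_forall_eq_zero_or_eq_one hG')
      (hG'D.le_closure (X := A - G'))
  · refine ⟨ha.mono_s18 hC' (sub_le_sub_left hG'le A), fun hDC' => hne (le_antisymm hG'le ?_)⟩
    subst hDC'
    exact hGD_eq ▸ exceedIndicator_le (nonneg_of_forall_eq_zero_or_eq_one hG')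
      (hC'.le_closure (X := A - G'))

/-- **Theorem `minimal_contributing`.** Let `G` be a candidate divisor
contributing to the jumping number `λ` and `D` the antinef closure of `⌊λF − K⌋ − G`.
Then: (a) the antinef closure of `⌊λF − K⌋ − G_D` is also `D`; (b) any candidate
divisor `G'` for `λ` whose associated closure equals `D` satisfies `G_D ≤ G'`;
(c) any proper reduced subdivisor `G' < G_D` defines a strictly larger closure
`C' > D`. -/
theorem minimal_contributing_divisor
    (s r : ℕ) (hr : 1 ≤ r) (hrs : r ≤ s)
    (N : Matrix (Fin s) (Fin s) ℤ)
    (hsym : ∀ i j, N i j = N j i)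
    (hoff : ∀ i j : Fin s, i ≠ j → 0 ≤ N i j)
    (hneg : ∀ x : Fin s → ℚ, (∀ i : Fin s, r ≤ (i : ℕ) → x i = 0) → x ≠ 0 →
      (∑ i, ∑ j, x i * x j * (N i j : ℚ)) < 0)
    (F : Fin s → ℤ) (hF1 : ∀ i, 1 ≤ F i) (hFanti : Antinef r N F)
    (K : Fin s → ℚ) (hKaff : ∀ i : Fin s, r ≤ (i : ℕ) → K i = 0)
    (hKexc : ∀ i : Fin s, (i : ℕ) < r →
      (∑ j, K j * (N j i : ℚ)) + (N i i : ℚ) = -2)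
    (lam' lam : ℚ) (hl0 : 0 ≤ lam') (hll : lam' < lam)
    (Dl' : Fin s → ℤ)
    (hconsec : ∀ c : ℚ, lam' ≤ c → c < lam →
      IsAntinefClosure r N (fun i => (⌊c * (F i : ℚ) - K i⌋ : ℚ)) Dl')
    (Dl : Fin s → ℤ)
    (hDl : IsAntinefClosure r N (fun i => (⌊lam * (F i : ℚ) - K i⌋ : ℚ)) Dl)
    (hjump : Dl ≠ Dl')
    (G : Fin s → ℤ) (hGred : ∀ i, G i = 0 ∨ G i = 1)
    (hGcand : ∀ i, G i = 1 → ∃ m : ℤ, 0 < m ∧ lam * (F i : ℚ) - K i = (m : ℚ))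
    (D : Fin s → ℤ)
    (hD : IsAntinefClosure r N (fun i => ((⌊lam * (F i : ℚ) - K i⌋ - G i : ℤ) : ℚ)) D)
    (hDne : D ≠ Dl)
    (lamD : ℚ)
    (hlamD_le : ∀ i, lamD ≤ (K i + 1 + (D i : ℚ)) / (F i : ℚ))
    (hlamD_mem : ∃ i, lamD = (K i + 1 + (D i : ℚ)) / (F i : ℚ))
    (GD : Fin s → ℤ)
    (hGD : ∀ i, GD i = if lamD * (F i : ℚ) = K i + 1 + (D i : ℚ) then 1 else 0) :
    IsAntinefClosure r N (fun i => ((⌊lam * (F i : ℚ) - K i⌋ - GD i : ℤ) : ℚ)) D ∧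
      (∀ G' : Fin s → ℤ, (∀ i, G' i = 0 ∨ G' i = 1) →
        (∀ i, G' i = 1 → ∃ m : ℤ, 0 < m ∧ lam * (F i : ℚ) - K i = (m : ℚ)) →
        IsAntinefClosure r N (fun i => ((⌊lam * (F i : ℚ) - K i⌋ - G' i : ℤ) : ℚ)) D →
        GD ≤ G') ∧
      (∀ G' : Fin s → ℤ, (∀ i, G' i = 0 ∨ G' i = 1) → G' ≤ GD → G' ≠ GD →
        ∀ C' : Fin s → ℤ,
          IsAntinefClosure r N
            (fun i => ((⌊lam * (F i : ℚ) - K i⌋ - G' i : ℤ) : ℚ)) C' →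
          D ≤ C' ∧ D ≠ C') :=
  minimal_contributing_divisor_general s r N F hF1 K lam Dl hDl G hGred hGcand D hD hDne lamD
    hlamD_le hlamD_mem GD hGD
end

section
/- Let 0 ≤ λ' < λ be consecutive jumping values and let D be an integral antinef divisor with λ_D = λ. Then G_D ≤ G_λ, i.e. S_D ⊆ supp G_λ. -/
/-
Just below `λ` the multiplier ideal is constant, so `D_{λ'} = D_c` for `c = max λ' (λ - 1/e_i)`.
Since `λ_D = λ`, the divisor `D` dominates `⌊cF - K⌋`, hence `D_{λ'} ≤ D` by minimality of the
antinef closure. Conversely, at an index `i ∈ S_D` we have `d_i = λ e_i - k_i - 1 ≤ c e_i - k_i`,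
so `d_i ≤ ⌊c e_i - k_i⌋ ≤ e_i^{λ'}`. Thus `λ e_i = k_i + 1 + e_i^{λ'}`, i.e. `i ∈ supp G_λ`.
-/

open scoped BigOperators

lemma floor_mul_sub_le_of_lt {c lam f k : ℚ} {d : ℤ} (hf : 0 < f) (hc : c < lam)
    (hd : lam ≤ (k + 1 + d) / f) : ⌊c * f - k⌋ ≤ d := by
  rw [Int.floor_le_iff]
  have := mul_lt_mul_of_pos_right hc hf
  linarith [(le_div_iff₀ hf).mp hd]

lemma le_floor_mul_sub_of_eq {c lam f k : ℚ} {d : ℤ} (hf : 0 < f) (hc : lam - 1 / f ≤ c)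
    (hd : lam * f = k + 1 + d) : d ≤ ⌊c * f - k⌋ := by
  rw [Int.le_floor]
  have : (lam - 1 / f) * f ≤ c * f := mul_le_mul_of_nonneg_right hc hf.le
  rw [sub_mul, one_div_mul_cancel hf.ne'] at this
  linarith

lemma IsAntinefClosure.le_of_lt_threshold {s r : ℕ} {N : Matrix (Fin s) (Fin s) ℤ}
    {F : Fin s → ℤ} {K : Fin s → ℚ} {c lam : ℚ} {Dt D : Fin s → ℤ} (hF : ∀ j, 0 < F j)
    (hc : c < lam) (hDt : IsAntinefClosure r N (fun j => (⌊c * (F j : ℚ) - K j⌋ : ℚ)) Dt)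
    (hD : Antinef r N D) (hlamD : ∀ j, lam ≤ (K j + 1 + (D j : ℚ)) / (F j : ℚ)) :
    Dt ≤ D :=
  hDt.2.2 D hD fun j =>
    Int.cast_le.mpr (floor_mul_sub_le_of_lt (Int.cast_pos.mpr (hF j)) hc (hlamD j))

theorem support_le_minimal_jumping_divisor_general
    (s r : ℕ)
    (N : Matrix (Fin s) (Fin s) ℤ)
    (F : Fin s → ℤ) (hF1 : ∀ i, 1 ≤ F i)
    (K : Fin s → ℚ)
    (lam' lam : ℚ) (hll : lam' < lam)
    (Dl' : Fin s → ℤ)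
    (hconsec : ∀ c : ℚ, lam' ≤ c → c < lam →
      IsAntinefClosure r N (fun i => (⌊c * (F i : ℚ) - K i⌋ : ℚ)) Dl')
    (Gl : Fin s → ℤ)
    (hGl : ∀ i, Gl i = if lam * (F i : ℚ) = K i + 1 + (Dl' i : ℚ) then 1 else 0)
    (D : Fin s → ℤ) (hDanti : Antinef r N D)
    (hlamD_le : ∀ i, lam ≤ (K i + 1 + (D i : ℚ)) / (F i : ℚ)) :
    ∀ i, lam * (F i : ℚ) = K i + 1 + (D i : ℚ) → Gl i = 1 := by
  intro i hi
  have hF : ∀ j, 0 < F j := fun j => one_pos.trans_le (hF1 j)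
  have hFi : (0 : ℚ) < F i := by exact_mod_cast hF i
  set c := max lam' (lam - 1 / (F i : ℚ))
  have hc : c < lam := max_lt hll (sub_lt_self lam (one_div_pos.mpr hFi))
  have hDl' := hconsec c (le_max_left _ _) hc
  have hDl'_le : Dl' i ≤ D i := hDl'.le_of_lt_threshold hF hc hDanti hlamD_le i
  have hD_le : D i ≤ Dl' i := Int.cast_le.mp <|
    (Int.cast_le.mpr (le_floor_mul_sub_of_eq (c := c) hFi (le_max_right _ _) hi)).trans
      (hDl'.2.1 i)
  rw [hGl i, if_pos (by rw [hi, le_antisymm hDl'_le hD_le])]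

/-- **Proposition `min_min`.** For consecutive jumping values
`0 ≤ λ' < λ` and any integral antinef divisor `D` with `λ_D = λ`, one has
`G_D ≤ G_λ`, i.e. `S_D ⊆ supp G_λ`. -/
theorem support_le_minimal_jumping_divisor
    (s r : ℕ) (hr : 1 ≤ r) (hrs : r ≤ s)
    (N : Matrix (Fin s) (Fin s) ℤ)
    (hsym : ∀ i j, N i j = N j i)
    (hoff : ∀ i j : Fin s, i ≠ j → 0 ≤ N i j)
    (hneg : ∀ x : Fin s → ℚ, (∀ i : Fin s, r ≤ (i : ℕ) → x i = 0) → x ≠ 0 →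
      (∑ i, ∑ j, x i * x j * (N i j : ℚ)) < 0)
    (F : Fin s → ℤ) (hF1 : ∀ i, 1 ≤ F i) (hFanti : Antinef r N F)
    (K : Fin s → ℚ) (hKaff : ∀ i : Fin s, r ≤ (i : ℕ) → K i = 0)
    (hKexc : ∀ i : Fin s, (i : ℕ) < r →
      (∑ j, K j * (N j i : ℚ)) + (N i i : ℚ) = -2)
    (lam' lam : ℚ) (hl0 : 0 ≤ lam') (hll : lam' < lam)
    (Dl' : Fin s → ℤ)
    (hconsec : ∀ c : ℚ, lam' ≤ c → c < lam →
      IsAntinefClosure r N (fun i => (⌊c * (F i : ℚ) - K i⌋ : ℚ)) Dl')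
    (Dl : Fin s → ℤ)
    (hDl : IsAntinefClosure r N (fun i => (⌊lam * (F i : ℚ) - K i⌋ : ℚ)) Dl)
    (hjump : Dl ≠ Dl')
    (Gl : Fin s → ℤ)
    (hGl : ∀ i, Gl i = if lam * (F i : ℚ) = K i + 1 + (Dl' i : ℚ) then 1 else 0)
    (D : Fin s → ℤ) (hDanti : Antinef r N D)
    (hlamD_le : ∀ i, lam ≤ (K i + 1 + (D i : ℚ)) / (F i : ℚ))
    (hlamD_mem : ∃ i, lam = (K i + 1 + (D i : ℚ)) / (F i : ℚ)) :
    ∀ i, lam * (F i : ℚ) = K i + 1 + (D i : ℚ) → Gl i = 1 :=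
  support_le_minimal_jumping_divisor_general s r N F hF1 K lam' lam hll Dl' hconsec Gl hGl D hDanti
    hlamD_le
end
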